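/- arXiv:2007.05656 — 6 statements merged into one kernel-verified Lean document; each statement's English description precedes it below -/
import Mathlib

section
/- Let n ≥ 5, let W_{n−1} be the wheel graph on {1,…,n} with edge set E, and fix x ∈ [0,1]^n. For every subset T ⊆ {1,…,n−1} with T ∩ (T+1) = ∅ (indices cyclic modulo n−1) and every (x,y) ∈ T(W_{n−1}), we have ∑_{{i,j}∈E} y_{ij} ≥ φ(T). In particular, min{∑_{{i,j}∈E} y_{ij} : (x,y) ∈ T(W_{n−1})} ≥ Φ*. -/
open Finset

/-- Cyclic successor on the rim `{1, …, n-1}` of the wheel `W_{n-1}`. -/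
def wsucc (n i : ℕ) : ℕ := if i = n - 1 then 1 else i + 1

/-- Membership in the polytope `T(W_{n-1})`. -/
def memTW (n : ℕ) (x : ℕ → ℝ) (y : ℕ → ℕ → ℝ) : Prop :=
  (∀ i ∈ Finset.Icc 1 n, 0 ≤ x i ∧ x i ≤ 1) ∧
  (∀ i ∈ Finset.Icc 1 (n - 1),
      0 ≤ y i (wsucc n i) ∧ y i (wsucc n i) ≤ x i ∧
      y i (wsucc n i) ≤ x (wsucc n i) ∧ x i + x (wsucc n i) - y i (wsucc n i) ≤ 1) ∧
  (∀ i ∈ Finset.Icc 1 (n - 1),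
      0 ≤ y i n ∧ y i n ≤ x i ∧ y i n ≤ x n ∧ x i + x n - y i n ≤ 1) ∧
  (∀ i ∈ Finset.Icc 1 (n - 1),
      y i (wsucc n i) + y i n + y (wsucc n i) n ≥ x i + x (wsucc n i) + x n - 1)

/-- The sum of the `y`-variables over all edges of the wheel `W_{n-1}`. -/
noncomputable def edgeSumW (n : ℕ) (y : ℕ → ℕ → ℝ) : ℝ :=
  ∑ i ∈ Finset.Icc 1 (n - 1), y i (wsucc n i) + ∑ i ∈ Finset.Icc 1 (n - 1), y i n

/-- The dual bound `φ(T)`. -/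
noncomputable def phiW (n : ℕ) (x : ℕ → ℝ) (T : Finset ℕ) : ℝ :=
  ∑ i ∈ Finset.Icc 1 (n - 1) \ T, max 0 (x i + x (wsucc n i) - 1) +
  ∑ i ∈ Finset.Icc 1 (n - 1) \ (T ∪ T.image (wsucc n)), max 0 (x i + x n - 1) +
  ∑ i ∈ T, max 0 (x i + x (wsucc n i) + x n - 1)

/-- `Φ* = max{φ(T) : T ⊆ {1,…,n-1}, T ∩ (T+1) = ∅}`. -/
noncomputable def phiStarW (n : ℕ) (x : ℕ → ℝ) : ℝ :=
  ((Finset.Icc 1 (n - 1)).powerset.filter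
      (fun T => T ∩ T.image (wsucc n) = ∅)).sup'
    ⟨∅, by simp⟩ (phiW n x)

/-
Split the edges of the wheel into the rim edges `{i, i+1}` with `i ∉ T`, the spokes `{i, n}` with
`i ∉ T ∪ (T+1)`, and, for each `i ∈ T`, the triangle `{i, i+1, n}`. Since `T` and `T+1` are disjoint,
every edge is counted exactly once, so the edge sum regroups accordingly. Each rim edge and spoke
carries at least `max 0 (x_i + x_j - 1)` by the McCormick inequalities, and each triangle at least
`max 0 (x_i + x_{i+1} + x_n - 1)` by the triangle inequality and nonnegativity.
-/

lemma wsucc_mem_Icc {n i : ℕ} (hi : i ∈ Icc 1 (n - 1)) : wsucc n i ∈ Icc 1 (n - 1) := by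
  simp only [mem_Icc] at hi ⊢
  unfold wsucc
  split_ifs <;> omega

lemma wsucc_injOn (n : ℕ) : Set.InjOn (wsucc n) (Icc 1 (n - 1)) := by
  intro i hi j hj h
  simp only [coe_Icc, Set.mem_Icc] at hi hj
  unfold wsucc at h
  split_ifs at h <;> omega

lemma edgeSumW_eq_of_disjoint {n : ℕ} {T : Finset ℕ} (hT : T ⊆ Icc 1 (n - 1))
    (hdisj : Disjoint T (T.image (wsucc n))) (y : ℕ → ℕ → ℝ) :
    edgeSumW n y =
      ∑ i ∈ Icc 1 (n - 1) \ T, y i (wsucc n i) +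
      ∑ i ∈ Icc 1 (n - 1) \ (T ∪ T.image (wsucc n)), y i n +
      ∑ i ∈ T, (y i (wsucc n i) + y i n + y (wsucc n i) n) := by
  have himage : T.image (wsucc n) ⊆ Icc 1 (n - 1) := by
    intro j hj
    obtain ⟨i, hi, rfl⟩ := mem_image.mp hj
    exact wsucc_mem_Icc (hT hi)
  have hrim := sum_sdiff hT (f := fun i => y i (wsucc n i))
  have hspoke := sum_sdiff (union_subset hT himage) (f := fun i => y i n)
  rw [sum_union hdisj, sum_image ((wsucc_injOn n).mono (coe_subset.mpr hT))] at hspoke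
  simp only [edgeSumW, sum_add_distrib]
  linarith

lemma max_zero_sub_one_le {a y : ℝ} (hy : 0 ≤ y) (h : a - y ≤ 1) : max 0 (a - 1) ≤ y :=
  max_le hy (by linarith)

theorem phiW_le_edgeSumW {n : ℕ} {x : ℕ → ℝ} {T : Finset ℕ} (hT : T ⊆ Icc 1 (n - 1))
    (hdisj : T ∩ T.image (wsucc n) = ∅) {y : ℕ → ℕ → ℝ} (hy : memTW n x y) :
    phiW n x T ≤ edgeSumW n y := by
  obtain ⟨-, hrim, hspoke, htri⟩ := hy
  rw [edgeSumW_eq_of_disjoint hT (disjoint_iff_inter_eq_empty.mpr hdisj), phiW]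
  gcongr with i hi i hi i hi
  · obtain ⟨h0, -, -, h⟩ := hrim i (mem_sdiff.mp hi).1
    exact max_zero_sub_one_le h0 h
  · obtain ⟨h0, -, -, h⟩ := hspoke i (mem_sdiff.mp hi).1
    exact max_zero_sub_one_le h0 h
  · have hrim₀ := (hrim i (hT hi)).1
    have hspoke₀ := (hspoke i (hT hi)).1
    have hspoke₀' := (hspoke (wsucc n i) (wsucc_mem_Icc (hT hi))).1
    exact max_zero_sub_one_le (by positivity) (by linarith [htri i (hT hi)])

theorem phiStarW_le_edgeSumW {n : ℕ} {x : ℕ → ℝ} {y : ℕ → ℕ → ℝ} (hy : memTW n x y) :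
    phiStarW n x ≤ edgeSumW n y := by
  refine sup'_le _ _ fun T hT => ?_
  simp only [mem_filter, mem_powerset] at hT
  exact phiW_le_edgeSumW hT.1 hT.2 hy

theorem wheel_dual_lower_bound_general (n : ℕ) (x : ℕ → ℝ) :
    (∀ T ⊆ Finset.Icc 1 (n - 1), T ∩ T.image (wsucc n) = ∅ →
        ∀ y : ℕ → ℕ → ℝ, memTW n x y → phiW n x T ≤ edgeSumW n y) ∧
    (∀ y : ℕ → ℕ → ℝ, memTW n x y → phiStarW n x ≤ edgeSumW n y) :=
  ⟨fun _ hT hdisj _ hy => phiW_le_edgeSumW hT hdisj hy, fun _ hy => phiStarW_le_edgeSumW hy⟩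

theorem wheel_dual_lower_bound (n : ℕ) (hn : 5 ≤ n) (x : ℕ → ℝ)
    (hx : ∀ i ∈ Finset.Icc 1 n, 0 ≤ x i ∧ x i ≤ 1) :
    (∀ T ⊆ Finset.Icc 1 (n - 1), T ∩ T.image (wsucc n) = ∅ →
        ∀ y : ℕ → ℕ → ℝ, memTW n x y → phiW n x T ≤ edgeSumW n y) ∧
    (∀ y : ℕ → ℕ → ℝ, memTW n x y → phiStarW n x ≤ edgeSumW n y) :=
  wheel_dual_lower_bound_general n x
end

section
/- Let n = n1 + n2 with n1, n2 ≥ 1, let G be the complete split graph with clique V1 and independent set V2 and edge set E, and let P be the corresponding polytope of Theorem 3 (McCormick upper bounds, lower bounds y_{ij} ≥ x_i + x_j − 1 for i ∈ V1, j ∈ V2, and the listed clique inequalities). For x ∈ [0,1]^n write LB_P(x) = min{∑_{{i,j}∈E} y_{ij} : (x,y) ∈ P}. Suppose there exists x ∈ [0,1]^n such that for all Lebesgue-measurable sets X_1, …, X_n ⊆ [0,1] with μ(X_i) = x_i for all i one has LB_P(x) < ∑_{{i,j}∈E} μ(X_i ∩ X_j). Then there exists such a vector x with 0 < x_i < 1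 for all i ∈ {1,…,n}. -/
/-!
A realization of `x` (measurable sets `X_i ⊆ [0,1]` with `μ(X_i) = x_i`) is described, as far as
the measures `μ(X_i ∩ X_j)` go, by the distribution of its atoms, a probability distribution on
subsets of `V` with marginals `x`; conversely every such distribution is realized by unions of
intervals. The edge sum is linear in the distribution, so by compactness it attains a minimum
`M` over the realizations of `x`, and `M > LB_P(x)` by hypothesis.

Now move to `x' = (1 - ε) x + ε/2`. Since `P` is convex and contains the points
`(1_A, 1_A 1_Aᵀ)`, it contains the correlation polytope: the overlaps of every realization, and
the point with all `x_i = y_ij = 1/2`. Hence `LB_P(x') ≤ (1 - ε) LB_P(x) + ε |E| / 2`.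
A realization of `x'` can be adjusted set by set into a realization of `x`, changing each
`μ(X_i ∩ X_j)` by at most `ε`, so its edge sum is at least `M - ε |E|`. For small `ε` the gap
survives, and `x'` lies in the open cube.
-/

open Finset

/-- Membership in the polytope `P` of Theorem 3 for the complete split graph with clique
`V1 = {1,…,n1}` and independent set `V2 = {n1+1,…,n1+n2}`: McCormick bounds
`0 ≤ y_{ij} ≤ min{x_i,x_j}` for all pairs, lower bounds `y_{ij} ≥ x_i + x_j - 1` for
`i ∈ V1`, `j ∈ V2`, and the clique inequalities
`y(E*(V1 ∪ S)) ≥ α x(V1 ∪ S) - α(α+1)/2` for `S ⊆ V2`, `|S| ≤ n1 - 1`, `1 ≤ α ≤ n1 - 1`. -/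
def memPSplit (n1 n2 : ℕ) (x : ℕ → ℝ) (y : ℕ → ℕ → ℝ) : Prop :=
  (∀ i ∈ Finset.Icc 1 (n1 + n2), 0 ≤ x i ∧ x i ≤ 1) ∧
  (∀ i ∈ Finset.Icc 1 (n1 + n2), ∀ j ∈ Finset.Icc 1 (n1 + n2), i < j →
      0 ≤ y i j ∧ y i j ≤ min (x i) (x j)) ∧
  (∀ i ∈ Finset.Icc 1 n1, ∀ j ∈ Finset.Icc (n1 + 1) (n1 + n2),
      x i + x j - 1 ≤ y i j) ∧
  (∀ S ⊆ Finset.Icc (n1 + 1) (n1 + n2), S.card ≤ n1 - 1 →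
    ∀ α : ℕ, 1 ≤ α → α ≤ n1 - 1 →
      (α : ℝ) * (∑ i ∈ Finset.Icc 1 n1 ∪ S, x i) - (α : ℝ) * ((α : ℝ) + 1) / 2 ≤
        ∑ i ∈ Finset.Icc 1 n1 ∪ S,
          ∑ j ∈ (Finset.Icc 1 n1 ∪ S).filter (fun j => i < j), y i j)

/-- The sum of the `y`-variables over all edges of the complete split graph. -/
noncomputable def edgeSumSplit (n1 n2 : ℕ) (y : ℕ → ℕ → ℝ) : ℝ :=
  ∑ i ∈ Finset.Icc 1 n1, ∑ j ∈ Finset.Icc (i + 1) (n1 + n2), y i j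

/-- The quadratic function `f(x) = ∑_{ij ∈ E} x_i x_j` for the complete split graph. -/
noncomputable def fSplit (n1 n2 : ℕ) (x : ℕ → ℝ) : ℝ :=
  ∑ i ∈ Finset.Icc 1 n1, ∑ j ∈ Finset.Icc (i + 1) (n1 + n2), x i * x j

open MeasureTheory

/-- `LB_P(x)`: the minimum of `∑_{ij ∈ E} y_{ij}` over the fiber of `P` above `x`. -/
noncomputable def LBSplit (n1 n2 : ℕ) (x : ℕ → ℝ) : ℝ :=
  sInf {z : ℝ | ∃ y : ℕ → ℕ → ℝ, memPSplit n1 n2 x y ∧ z = edgeSumSplit n1 n2 y}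

theorem two_mul_sum_sum_filter_lt {α : Type*} [LinearOrder α] (T : Finset α) (f : α → α → ℝ)
    (hf : ∀ i j, f i j = f j i) :
    2 * ∑ i ∈ T, ∑ j ∈ T with i < j, f i j = ∑ i ∈ T, ∑ j ∈ T, f i j - ∑ i ∈ T, f i i := by
  have hrow : ∀ i ∈ T, ∑ j ∈ T, f i j =
      ∑ j ∈ T with i < j, f i j + ∑ j ∈ T with j < i, f i j + f i i := by
    intro i hi
    calc ∑ j ∈ T, f i j = ∑ j ∈ T, ((if i < j then f i j else 0) +
          (if j < i then f i j else 0) + (if i = j then f i j else 0)) := by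
          refine sum_congr rfl fun j _ => ?_
          rcases lt_trichotomy i j with h | rfl | h
          · simp [h, h.not_gt, h.ne]
          · simp
          · simp [h, h.not_gt, h.ne']
      _ = _ := by rw [sum_add_distrib, sum_add_distrib, ← sum_filter, ← sum_filter,
          sum_ite_eq, if_pos hi]
  have hswap : ∑ i ∈ T, ∑ j ∈ T with j < i, f i j = ∑ i ∈ T, ∑ j ∈ T with i < j, f i j := by
    rw [sum_comm' (t' := T) (s' := fun j => T.filter (j < ·)) (by grind)]
    exact sum_congr rfl fun i _ => sum_congr rfl fun j _ => hf j i
  rw [sum_congr rfl hrow, sum_add_distrib, sum_add_distrib, hswap]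
  ring

theorem mul_sub_choose_two_succ_le_choose_two (a k : ℕ) :
    (a : ℝ) * k - a * (a + 1) / 2 ≤ k * (k - 1) / 2 := by
  -- the difference of the two sides is `m (m - 1) / 2` for the integer `m = k - a`
  have h : ((k : ℝ) - a) ≤ ((k : ℝ) - a) ^ 2 := by exact_mod_cast Int.le_self_sq ((k : ℤ) - a)
  nlinarith

theorem mul_sum_sub_le_sum_sum_filter_lt_of_idempotent {ι : Type*} [LinearOrder ι]
    (C : Finset ι) {a : ι → ℝ} (ha : ∀ i, a i * a i = a i) {k : ℕ} (hk : ∑ i ∈ C, a i = k)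
    (α : ℕ) :
    α * ∑ i ∈ C, a i - α * (α + 1) / 2 ≤ ∑ i ∈ C, ∑ j ∈ C with i < j, a i * a j := by
  have hpairs := two_mul_sum_sum_filter_lt C (fun i j => a i * a j) fun _ _ => mul_comm _ _
  rw [← sum_mul_sum, sum_congr rfl fun i _ => ha i, hk] at hpairs
  rw [hk]
  nlinarith [mul_sub_choose_two_succ_le_choose_two α k]

theorem convex_memPSplit (n1 n2 : ℕ) :
    Convex ℝ {p : (ℕ → ℝ) × (ℕ → ℕ → ℝ) | memPSplit n1 n2 p.1 p.2} := by
  rintro ⟨x, y⟩ hp ⟨x', y'⟩ hp' a b ha hb hab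
  obtain ⟨hbox, hmc, hlow, hclq⟩ : memPSplit n1 n2 x y := hp
  obtain ⟨hbox', hmc', hlow', hclq'⟩ : memPSplit n1 n2 x' y' := hp'
  change memPSplit n1 n2 (a • x + b • x') (a • y + b • y')
  simp only [memPSplit, Pi.add_apply, Pi.smul_apply, smul_eq_mul]
  refine ⟨fun i hi => ?_, fun i hi j hj hij => ?_, fun i hi j hj => ?_,
    fun S hS hcard α h1 h2 => ?_⟩
  · obtain ⟨h0, h1⟩ := hbox i hi
    obtain ⟨h0', h1'⟩ := hbox' i hi
    constructor <;> nlinarith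
  · obtain ⟨h0, hle⟩ := hmc i hi j hj hij
    obtain ⟨h0', hle'⟩ := hmc' i hi j hj hij
    rw [le_min_iff] at hle hle' ⊢
    refine ⟨by positivity, by nlinarith, by nlinarith⟩
  · nlinarith [hlow i hi j hj, hlow' i hi j hj]
  · have h := hclq S hS hcard α h1 h2
    have h' := hclq' S hS hcard α h1 h2
    simp only [sum_add_distrib, ← mul_sum]
    linear_combination a * h + b * h' + ((α : ℝ) * (α + 1) / 2) * hab

def corrVertex (A : Finset ℕ) : (ℕ → ℝ) × (ℕ → ℕ → ℝ) :=
  (fun i => if i ∈ A then 1 else 0,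
    fun i j => (if i ∈ A then 1 else 0) * (if j ∈ A then 1 else 0))

theorem memPSplit_corrVertex (n1 n2 : ℕ) (A : Finset ℕ) :
    memPSplit n1 n2 (corrVertex A).1 (corrVertex A).2 := by
  simp only [memPSplit, corrVertex]
  refine ⟨fun i _ => by split_ifs <;> norm_num, fun i _ j _ _ => by split_ifs <;> norm_num,
    fun i _ j _ => by split_ifs <;> norm_num, fun S _ _ α _ _ => ?_⟩
  exact mul_sum_sub_le_sum_sum_filter_lt_of_idempotent _ (fun i => by split_ifs <;> norm_num)
    (sum_boole _ _) α

/-- The first and second moments of the random subset of `ℕ` that equals `A` with probability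
`c A`. -/
def corrPoint (P : Finset (Finset ℕ)) (c : Finset ℕ → ℝ) : (ℕ → ℝ) × (ℕ → ℕ → ℝ) :=
  ∑ A ∈ P, c A • corrVertex A

theorem corrPoint_fst_apply (P : Finset (Finset ℕ)) (c : Finset ℕ → ℝ) (i : ℕ) :
    (corrPoint P c).1 i = ∑ A ∈ P with i ∈ A, c A := by
  simp [corrPoint, corrVertex, Prod.fst_sum, Finset.sum_apply, sum_filter]

theorem corrPoint_snd_apply (P : Finset (Finset ℕ)) (c : Finset ℕ → ℝ) (i j : ℕ) :
    (corrPoint P c).2 i j = ∑ A ∈ P with i ∈ A ∧ j ∈ A, c A := by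
  simp only [corrPoint, corrVertex, Prod.snd_sum, Prod.smul_snd, Finset.sum_apply, Pi.smul_apply,
    smul_eq_mul, sum_filter]
  refine sum_congr rfl fun A _ => ?_
  split_ifs <;> simp_all

theorem corrPoint_snd_self (P : Finset (Finset ℕ)) (c : Finset ℕ → ℝ) (i : ℕ) :
    (corrPoint P c).2 i i = (corrPoint P c).1 i := by
  simp only [corrPoint_fst_apply, corrPoint_snd_apply, and_self]

theorem continuous_corrPoint (P : Finset (Finset ℕ)) : Continuous (corrPoint P) :=
  continuous_finsetSum _ fun A _ => (continuous_apply A).smul continuous_const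

theorem memPSplit_corrPoint (n1 n2 : ℕ) {P : Finset (Finset ℕ)} {c : Finset ℕ → ℝ}
    (hc : ∀ A ∈ P, 0 ≤ c A) (hc1 : ∑ A ∈ P, c A = 1) :
    memPSplit n1 n2 (corrPoint P c).1 (corrPoint P c).2 :=
  (convex_memPSplit n1 n2).sum_mem hc hc1 fun A _ => memPSplit_corrVertex n1 n2 A

theorem memPSplit.congr {n1 n2 : ℕ} {x x' : ℕ → ℝ} {y y' : ℕ → ℕ → ℝ} (h : memPSplit n1 n2 x y)
    (hx : ∀ i ∈ Icc 1 (n1 + n2), x i = x' i)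
    (hy : ∀ i ∈ Icc 1 (n1 + n2), ∀ j ∈ Icc 1 (n1 + n2), y i j = y' i j) :
    memPSplit n1 n2 x' y' := by
  obtain ⟨hbox, hmc, hlow, hclq⟩ := h
  have hV1 : Icc 1 n1 ⊆ Icc 1 (n1 + n2) := Icc_subset_Icc le_rfl (Nat.le_add_right _ _)
  have hV2 : Icc (n1 + 1) (n1 + n2) ⊆ Icc 1 (n1 + n2) := Icc_subset_Icc (by omega) le_rfl
  refine ⟨fun i hi => hx i hi ▸ hbox i hi, fun i hi j hj hij => ?_, fun i hi j hj => ?_,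
    fun S hS hcard α h1 h2 => ?_⟩
  · rw [← hx i hi, ← hx j hj, ← hy i hi j hj]
    exact hmc i hi j hj hij
  · rw [← hx i (hV1 hi), ← hx j (hV2 hj), ← hy i (hV1 hi) j (hV2 hj)]
    exact hlow i hi j hj
  · have hC : Icc 1 n1 ∪ S ⊆ Icc 1 (n1 + n2) := union_subset hV1 (hS.trans hV2)
    rw [← sum_congr rfl fun i hi => hx i (hC hi),
      ← sum_congr rfl fun i hi => sum_congr rfl fun j hj => hy i (hC hi) j (hC (mem_filter.1 hj).1)]
    exact hclq S hS hcard α h1 h2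

theorem memPSplit_half (n1 n2 : ℕ) : memPSplit n1 n2 (fun _ => 1 / 2) (fun _ _ => 1 / 2) := by
  have h := (convex_memPSplit n1 n2) (memPSplit_corrVertex n1 n2 ∅)
    (memPSplit_corrVertex n1 n2 (Icc 1 (n1 + n2))) (by norm_num : (0 : ℝ) ≤ 1 / 2)
    (by norm_num : (0 : ℝ) ≤ 1 / 2) (by norm_num)
  refine memPSplit.congr h (fun i hi => ?_) (fun i hi j hj => ?_)
  · norm_num [corrVertex, hi, -mem_Icc]
  · norm_num [corrVertex, hi, hj, -mem_Icc]

section Pattern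

variable {α ι : Type*} {s : Finset ι} {X : ι → Set α}

open Classical in
/-- The fibres of `pattern s X` are the atoms of the family `(X i)_{i ∈ s}`. -/
noncomputable def pattern (s : Finset ι) (X : ι → Set α) (t : α) : Finset ι := {i ∈ s | t ∈ X i}

theorem mem_pattern {t : α} {i : ι} : i ∈ pattern s X t ↔ i ∈ s ∧ t ∈ X i := by
  simp [pattern]

@[simp]
theorem pattern_subset (t : α) : pattern s X t ⊆ s := fun _ hi => (mem_pattern.1 hi).1

variable [MeasurableSpace α]

theorem measurableSet_pattern_preimage_singleton (hX : ∀ i ∈ s, MeasurableSet (X i))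
    {A : Finset ι} (hA : A ⊆ s) : MeasurableSet (pattern s X ⁻¹' {A}) := by
  classical
  have h : pattern s X ⁻¹' {A} = ⋂ i ∈ s, if i ∈ A then X i else (X i)ᶜ := by
    ext t
    simp only [Set.mem_preimage, Set.mem_singleton_iff, Set.mem_iInter, Finset.ext_iff,
      mem_pattern]
    constructor
    · intro h i hi
      split_ifs with hiA
      · exact ((h i).2 hiA).2
      · exact fun ht => hiA ((h i).1 ⟨hi, ht⟩)
    · intro h i
      by_cases hi : i ∈ s
      · have := h i hi
        split_ifs at this with hiA <;> simp_all
      · exact ⟨fun h' => absurd h'.1 hi, fun hiA => absurd (hA hiA) hi⟩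
  rw [h]
  refine .biInter s.countable_toSet fun i hi => ?_
  split_ifs
  exacts [hX i hi, (hX i hi).compl]

theorem measureReal_inter_eq_sum_pattern [DecidableEq ι] (μ : Measure α) [IsFiniteMeasure μ]
    (hX : ∀ i ∈ s, MeasurableSet (X i)) {i j : ι} (hi : i ∈ s) (hj : j ∈ s) :
    μ.real (X i ∩ X j) =
      ∑ A ∈ s.powerset with i ∈ A ∧ j ∈ A, μ.real (pattern s X ⁻¹' {A}) := by
  rw [sum_measureReal_preimage_singleton _ fun A hA =>
    measurableSet_pattern_preimage_singleton hX (mem_powerset.1 (mem_filter.1 hA).1)]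
  congr 1
  ext t
  simp [mem_pattern, hi, hj]

theorem sum_measureReal_pattern (μ : Measure α) [IsFiniteMeasure μ]
    (hX : ∀ i ∈ s, MeasurableSet (X i)) :
    ∑ A ∈ s.powerset, μ.real (pattern s X ⁻¹' {A}) = μ.real Set.univ := by
  rw [sum_measureReal_preimage_singleton _ fun A hA =>
    measurableSet_pattern_preimage_singleton hX (mem_powerset.1 hA)]
  congr 1
  ext t
  simp

end Pattern

theorem exists_pairwiseDisjoint_Ico_measureReal_eq {β : Type*} [DecidableEq β] (P : Finset β)
    (c : β → ℝ) (hc : ∀ A ∈ P, 0 ≤ c A) :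
    ∃ I : β → Set ℝ, (P : Set β).PairwiseDisjoint I ∧ ∀ A ∈ P,
      MeasurableSet (I A) ∧ I A ⊆ Set.Ico 0 (∑ B ∈ P, c B) ∧ volume.real (I A) = c A := by
  induction P using Finset.induction_on with
  | empty => exact ⟨fun _ => ∅, by simp, by simp⟩
  | insert a P ha ih =>
    obtain ⟨I, hdisj, hI⟩ := ih fun A hA => hc A (mem_insert_of_mem hA)
    set S := ∑ B ∈ P, c B
    have hS : 0 ≤ S := sum_nonneg fun A hA => hc A (mem_insert_of_mem hA)
    have hca := hc a (mem_insert_self a P)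
    refine ⟨fun A => if A = a then Set.Ico S (S + c a) else I A, ?_, ?_⟩
    · rw [coe_insert, Set.pairwiseDisjoint_insert]
      refine ⟨hdisj.mono_on fun A hA => by simp [ne_of_mem_of_not_mem hA ha], fun B hB hne => ?_⟩
      simp only [↓reduceIte, if_neg (Ne.symm hne)]
      exact Set.disjoint_left.2 fun t ht htB => (hI B hB).2.1 htB |>.2.not_ge ht.1
    · rw [sum_insert ha]
      intro A hA
      by_cases hAa : A = a
      · subst hAa
        simp only [↓reduceIte, measurableSet_Ico, Real.volume_real_Ico, true_and]
        exact ⟨Set.Ico_subset_Ico hS (add_comm _ _).le, by simp [hca]⟩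
      · obtain ⟨hm, hsub, hvol⟩ := hI A ((mem_insert.1 hA).resolve_left hAa)
        simp only [if_neg hAa]
        exact ⟨hm, hsub.trans (Set.Ico_subset_Ico le_rfl (by linarith)), hvol⟩

def IsRealization (s : Finset ℕ) (x : ℕ → ℝ) (X : ℕ → Set ℝ) : Prop :=
  ∀ i ∈ s, MeasurableSet (X i) ∧ X i ⊆ Set.Icc 0 1 ∧ volume.real (X i) = x i

noncomputable def overlap (X : ℕ → Set ℝ) (i j : ℕ) : ℝ := volume.real (X i ∩ X j)

theorem overlap_self (X : ℕ → Set ℝ) (i : ℕ) : overlap X i i = volume.real (X i) := by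
  rw [overlap, Set.inter_self]

theorem exists_overlap_eq_corrPoint {P : Finset (Finset ℕ)} {c : Finset ℕ → ℝ}
    (hc : ∀ A ∈ P, 0 ≤ c A) (hc1 : ∑ A ∈ P, c A = 1) :
    ∃ X : ℕ → Set ℝ, (∀ i, MeasurableSet (X i) ∧ X i ⊆ Set.Icc 0 1) ∧
      overlap X = (corrPoint P c).2 := by
  obtain ⟨I, hdisj, hI⟩ := exists_pairwiseDisjoint_Ico_measureReal_eq P c hc
  rw [hc1] at hI
  have hunion : ∀ p : Finset ℕ → Prop, [DecidablePred p] →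
      volume.real (⋃ A ∈ P.filter p, I A) = ∑ A ∈ P with p A, c A := fun p _ => by
    rw [measureReal_biUnion_finset (hdisj.subset (filter_subset _ _))
      (fun A hA => (hI A (mem_filter.1 hA).1).1)
      (fun A hA => measure_ne_top_of_subset (hI A (mem_filter.1 hA).1).2.1 measure_Ico_lt_top.ne)]
    exact sum_congr rfl fun A hA => (hI A (mem_filter.1 hA).1).2.2
  refine ⟨fun i => ⋃ A ∈ P.filter (i ∈ ·), I A, fun i => ⟨?_, ?_⟩, ?_⟩
  · exact .biUnion (P.filter _).countable_toSet fun A hA => (hI A (mem_filter.1 hA).1).1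
  · exact Set.iUnion₂_subset fun A hA =>
      (hI A (mem_filter.1 hA).1).2.1.trans Set.Ico_subset_Icc_self
  · ext i j
    have hinter : (⋃ A ∈ P.filter (i ∈ ·), I A) ∩ ⋃ A ∈ P.filter (j ∈ ·), I A =
        ⋃ A ∈ P.filter fun A => i ∈ A ∧ j ∈ A, I A := by
      ext t
      simp only [Set.mem_inter_iff, Set.mem_iUnion, mem_filter, exists_prop]
      constructor
      · rintro ⟨⟨A, ⟨hA, hiA⟩, htA⟩, ⟨B, ⟨hB, hjB⟩, htB⟩⟩
        obtain rfl := hdisj.elim_set hA hB t htA htB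
        exact ⟨A, ⟨hA, hiA, hjB⟩, htA⟩
      · rintro ⟨A, ⟨hA, hiA, hjA⟩, htA⟩
        exact ⟨⟨A, ⟨hA, hiA⟩, htA⟩, ⟨A, ⟨hA, hjA⟩, htA⟩⟩
    rw [overlap, hinter, hunion, corrPoint_snd_apply]

noncomputable def atomWeights (s : Finset ℕ) (X : ℕ → Set ℝ) (A : Finset ℕ) : ℝ :=
  (volume.restrict (Set.Icc 0 1)).real (pattern s X ⁻¹' {A})

theorem atomWeights_mem_Icc (s : Finset ℕ) (X : ℕ → Set ℝ) (A : Finset ℕ) :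
    atomWeights s X A ∈ Set.Icc 0 1 := by
  refine ⟨measureReal_nonneg, ?_⟩
  calc atomWeights s X A ≤ (volume.restrict (Set.Icc (0 : ℝ) 1)).real Set.univ :=
        measureReal_mono (Set.subset_univ _)
    _ = 1 := by simp

namespace IsRealization

variable {s : Finset ℕ} {x : ℕ → ℝ} {X : ℕ → Set ℝ}

theorem sum_atomWeights (hX : IsRealization s x X) :
    ∑ A ∈ s.powerset, atomWeights s X A = 1 := by
  unfold atomWeights
  rw [sum_measureReal_pattern _ fun i hi => (hX i hi).1]
  simp

theorem corrPoint_atomWeights_snd (hX : IsRealization s x X) {i j : ℕ} (hi : i ∈ s) (hj : j ∈ s) :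
    (corrPoint s.powerset (atomWeights s X)).2 i j = overlap X i j := by
  unfold atomWeights
  rw [corrPoint_snd_apply, overlap, ← measureReal_inter_eq_sum_pattern _ (fun i hi => (hX i hi).1)
    hi hj, measureReal_restrict_apply ((hX i hi).1.inter (hX j hj).1),
    Set.inter_eq_left.2 (Set.inter_subset_left.trans (hX i hi).2.1)]

theorem corrPoint_atomWeights_fst (hX : IsRealization s x X) {i : ℕ} (hi : i ∈ s) :
    (corrPoint s.powerset (atomWeights s X)).1 i = x i := by
  rw [← corrPoint_snd_self, hX.corrPoint_atomWeights_snd hi hi, overlap_self, (hX i hi).2.2]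

theorem memPSplit_overlap {n1 n2 : ℕ} (hX : IsRealization (Icc 1 (n1 + n2)) x X) :
    memPSplit n1 n2 x (overlap X) :=
  (memPSplit_corrPoint n1 n2 (fun A _ => (atomWeights_mem_Icc _ X A).1) hX.sum_atomWeights).congr
    (fun _ hi => hX.corrPoint_atomWeights_fst hi)
    (fun _ hi _ hj => hX.corrPoint_atomWeights_snd hi hj)

end IsRealization

theorem isRealization_Icc {s : Finset ℕ} {x : ℕ → ℝ} (hx : ∀ i ∈ s, 0 ≤ x i ∧ x i ≤ 1) :
    IsRealization s x fun i => Set.Icc 0 (x i) := fun i hi =>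
  ⟨measurableSet_Icc, Set.Icc_subset_Icc le_rfl (hx i hi).2, by simp [(hx i hi).1]⟩

theorem exists_isMinOn_realization (s : Finset ℕ) {x : ℕ → ℝ}
    (hx : ∀ i ∈ s, 0 ≤ x i ∧ x i ≤ 1) {Φ : (ℕ → ℕ → ℝ) → ℝ} (hΦ : Continuous Φ)
    (hΦs : ∀ y y', (∀ i ∈ s, ∀ j ∈ s, y i j = y' i j) → Φ y = Φ y') :
    ∃ X₀, IsRealization s x X₀ ∧ ∀ X, IsRealization s x X → Φ (overlap X₀) ≤ Φ (overlap X) := by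
  set P := s.powerset
  -- distributions on subsets of `s` with marginals `x`: the atoms of each realization of `x`
  -- give one, and each one is realized (`exists_overlap_eq_corrPoint`)
  set K := {c : Finset ℕ → ℝ |
    (∀ A, c A ∈ Set.Icc 0 1) ∧ ∑ A ∈ P, c A = 1 ∧ ∀ i ∈ s, (corrPoint P c).1 i = x i}
  have hK : ∀ X, IsRealization s x X → atomWeights s X ∈ K := fun X hX =>
    ⟨atomWeights_mem_Icc s X, hX.sum_atomWeights,
      fun _ hi => hX.corrPoint_atomWeights_fst hi⟩
  have hKclosed : IsClosed K := by
    simp only [K, Set.ofPred_and, Set.ofPred_forall]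
    refine .inter (isClosed_iInter fun A => isClosed_Icc.preimage (continuous_apply A))
      (.inter (isClosed_eq (continuous_finsetSum _ fun A _ => continuous_apply A)
        continuous_const) (isClosed_iInter fun i => isClosed_iInter fun _ => isClosed_eq ?_
          continuous_const))
    exact (continuous_apply i).comp (continuous_fst.comp (continuous_corrPoint P))
  have hKcompact : IsCompact K := (isCompact_univ_pi fun _ => isCompact_Icc).of_isClosed_subset
    hKclosed fun c hc => Set.mem_univ_pi.2 hc.1
  obtain ⟨c, hcK, hmin⟩ := hKcompact.exists_isMinOn ⟨_, hK _ (isRealization_Icc hx)⟩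
    (hΦ.comp (continuous_snd.comp (continuous_corrPoint P))).continuousOn
  obtain ⟨X₀, hX₀, hov⟩ := exists_overlap_eq_corrPoint (fun A _ => (hcK.1 A).1) hcK.2.1
  refine ⟨X₀, fun i hi => ⟨(hX₀ i).1, (hX₀ i).2, ?_⟩, fun X hX => ?_⟩
  · rw [← overlap_self, hov, corrPoint_snd_self, hcK.2.2 i hi]
  · rw [hov, hΦs (overlap X) _ fun i hi j hj => (hX.corrPoint_atomWeights_snd hi hj).symm]
    exact isMinOn_iff.1 hmin _ (hK X hX)

theorem measureReal_inter_le_add_sdiff {α : Type*} [MeasurableSpace α] {μ : Measure α}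
    {A B A' B' : Set α} (hA : μ A ≠ ⊤) (hB : μ B ≠ ⊤) (hA' : μ A' ≠ ⊤) :
    μ.real (A ∩ B) ≤ μ.real (A' ∩ B') + μ.real (A \ A') + μ.real (B \ B') := by
  have hcover : A ∩ B ⊆ A' ∩ B' ∪ A \ A' ∪ B \ B' := by
    rintro t ⟨htA, htB⟩
    by_cases htA' : t ∈ A' <;> by_cases htB' : t ∈ B' <;> simp_all
  calc μ.real (A ∩ B) ≤ μ.real (A' ∩ B' ∪ A \ A' ∪ B \ B') :=
        measureReal_mono hcover <| measure_union_ne_top (measure_union_ne_top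
          (measure_ne_top_of_subset Set.inter_subset_left hA')
          (measure_ne_top_of_subset Set.sdiff_subset hA))
          (measure_ne_top_of_subset Set.sdiff_subset hB)
    _ ≤ _ := (measureReal_union_le _ _).trans (by gcongr; exact measureReal_union_le _ _)

theorem volume_ne_top_of_subset_Icc {A : Set ℝ} {a b : ℝ} (h : A ⊆ Set.Icc a b) : volume A ≠ ⊤ :=
  measure_ne_top_of_subset h measure_Icc_lt_top.ne

theorem exists_subset_volume_real_eq {A : Set ℝ} {a b : ℝ} (hA : MeasurableSet A)
    (hAab : A ⊆ Set.Icc a b) {m : ℝ} (hm0 : 0 ≤ m) (hm : m ≤ volume.real A) :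
    ∃ B ⊆ A, MeasurableSet B ∧ volume.real B = m := by
  set g : ℝ → ℝ := fun t => volume.real (A ∩ Set.Iic t)
  have hfin : ∀ t, volume (A ∩ Set.Iic t) ≠ ⊤ := fun t =>
    volume_ne_top_of_subset_Icc (Set.inter_subset_left.trans hAab)
  -- `g` grows by at most `u - t` on `[t, u]`, since `A ∩ Iic u ⊆ (A ∩ Iic t) ∪ Ioc t u`
  have hg : Continuous g := by
    refine (LipschitzWith.of_le_add fun u t => ?_).continuous
    rcases le_total u t with hut | htu
    · exact (measureReal_mono (Set.inter_subset_inter_right _ (Set.Iic_subset_Iic.2 hut))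
        (hfin t)).trans (le_add_of_nonneg_right dist_nonneg)
    · calc g u ≤ volume.real (A ∩ Set.Iic t ∪ Set.Ioc t u) := by
            refine measureReal_mono (fun r ⟨hrA, hru⟩ => ?_)
              (measure_union_ne_top (hfin t) measure_Ioc_lt_top.ne)
            rcases le_or_gt r t with hrt | hrt
            exacts [Or.inl ⟨hrA, hrt⟩, Or.inr ⟨hrt, hru⟩]
        _ ≤ g t + dist u t := by
            refine (measureReal_union_le _ _).trans (add_le_add_right ?_ _)
            rw [Real.volume_real_Ioc_of_le htu, Real.dist_eq, abs_of_nonneg (by linarith)]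
  have hga : g a = 0 := by
    refine le_antisymm ?_ measureReal_nonneg
    calc g a ≤ volume.real (Set.Icc a a) :=
          measureReal_mono (fun r ⟨hrA, hra⟩ => ⟨(hAab hrA).1, hra⟩) measure_Icc_lt_top.ne
      _ = 0 := by simp [measureReal_def]
  have hgb : g b = volume.real A := by
    change volume.real (A ∩ Set.Iic b) = _
    rw [Set.inter_eq_left.2 (hAab.trans Set.Icc_subset_Iic_self)]
  obtain ⟨t, ht⟩ := intermediate_value_univ a b hg (by rw [hga, hgb]; exact ⟨hm0, hm⟩)
  exact ⟨A ∩ Set.Iic t, Set.inter_subset_left, hA.inter measurableSet_Iic, ht⟩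

theorem exists_volume_real_eq_sdiff_le {A : Set ℝ} (hA : MeasurableSet A)
    (hA1 : A ⊆ Set.Icc 0 1) {m : ℝ} (hm0 : 0 ≤ m) (hm1 : m ≤ 1) :
    ∃ B, MeasurableSet B ∧ B ⊆ Set.Icc 0 1 ∧ volume.real B = m ∧
      volume.real (B \ A) ≤ |volume.real A - m| := by
  rcases le_total m (volume.real A) with hmA | hAm
  · obtain ⟨B, hBA, hB, hBm⟩ := exists_subset_volume_real_eq hA hA1 hm0 hmA
    exact ⟨B, hB, hBA.trans hA1, hBm, by simp [Set.sdiff_eq_empty.2 hBA]⟩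
  · have hD : volume.real (Set.Icc 0 1 \ A) = 1 - volume.real A := by
      rw [measureReal_sdiff hA1 hA measure_Icc_lt_top.ne]
      simp
    obtain ⟨T, hTD, hT, hTm⟩ := exists_subset_volume_real_eq (measurableSet_Icc.diff hA)
      Set.sdiff_subset (sub_nonneg.2 hAm) (by linarith)
    have hT1 : T ⊆ Set.Icc 0 1 := hTD.trans Set.sdiff_subset
    refine ⟨A ∪ T, hA.union hT, Set.union_subset hA1 hT1, ?_, ?_⟩
    · rw [measureReal_union (Set.disjoint_left.2 fun r hrA hrT => (hTD hrT).2 hrA) hT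
        (volume_ne_top_of_subset_Icc hA1) (volume_ne_top_of_subset_Icc hT1), hTm]
      ring
    · rw [Set.union_sdiff_left, abs_sub_comm, abs_of_nonneg (sub_nonneg.2 hAm), ← hTm]
      exact measureReal_mono Set.sdiff_subset (volume_ne_top_of_subset_Icc hT1)

theorem IsRealization.exists_overlap_le {s : Finset ℕ} {x x' : ℕ → ℝ} {X' : ℕ → Set ℝ}
    (hX' : IsRealization s x' X') (hx : ∀ i ∈ s, 0 ≤ x i ∧ x i ≤ 1) :
    ∃ B, IsRealization s x B ∧ ∀ i ∈ s, ∀ j ∈ s,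
      overlap B i j ≤ overlap X' i j + |x' i - x i| + |x' j - x j| := by
  have h := fun i (hi : i ∈ s) =>
    exists_volume_real_eq_sdiff_le (hX' i hi).1 (hX' i hi).2.1 (hx i hi).1 (hx i hi).2
  choose! B hBm hB1 hBvol hBdiff using h
  refine ⟨B, fun i hi => ⟨hBm i hi, hB1 i hi, hBvol i hi⟩, fun i hi j hj => ?_⟩
  have hi' := hBdiff i hi
  have hj' := hBdiff j hj
  rw [(hX' i hi).2.2] at hi'
  rw [(hX' j hj).2.2] at hj'
  have := measureReal_inter_le_add_sdiff (A' := X' i) (B' := X' j)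
    (volume_ne_top_of_subset_Icc (hB1 i hi)) (volume_ne_top_of_subset_Icc (hB1 j hj))
    (volume_ne_top_of_subset_Icc (hX' i hi).2.1)
  unfold overlap
  linarith

section EdgeSum

variable {n1 n2 : ℕ}

theorem mem_Icc_of_mem_edge {i j : ℕ} (hi : i ∈ Icc 1 n1) (hj : j ∈ Icc (i + 1) (n1 + n2)) :
    i ∈ Icc 1 (n1 + n2) ∧ j ∈ Icc 1 (n1 + n2) ∧ i < j := by
  simp only [mem_Icc] at *
  omega

theorem edgeSumSplit_nonneg {x : ℕ → ℝ} {y : ℕ → ℕ → ℝ} (hy : memPSplit n1 n2 x y) :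
    0 ≤ edgeSumSplit n1 n2 y :=
  sum_nonneg fun i hi => sum_nonneg fun j hj =>
    let ⟨hi', hj', hij⟩ := mem_Icc_of_mem_edge hi hj
    (hy.2.1 i hi' j hj' hij).1

theorem edgeSumSplit_congr {y y' : ℕ → ℕ → ℝ}
    (h : ∀ i ∈ Icc 1 (n1 + n2), ∀ j ∈ Icc 1 (n1 + n2), y i j = y' i j) :
    edgeSumSplit n1 n2 y = edgeSumSplit n1 n2 y' :=
  sum_congr rfl fun i hi => sum_congr rfl fun j hj =>
    let ⟨hi', hj', _⟩ := mem_Icc_of_mem_edge hi hj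
    h i hi' j hj'

theorem edgeSumSplit_le_add_mul {y y' : ℕ → ℕ → ℝ} {δ : ℝ}
    (h : ∀ i ∈ Icc 1 (n1 + n2), ∀ j ∈ Icc 1 (n1 + n2), y i j ≤ y' i j + δ) :
    edgeSumSplit n1 n2 y ≤ edgeSumSplit n1 n2 y' + δ * edgeSumSplit n1 n2 fun _ _ => 1 := by
  simp only [edgeSumSplit, mul_sum, mul_one, ← sum_add_distrib]
  exact sum_le_sum fun i hi => sum_le_sum fun j hj =>
    let ⟨hi', hj', _⟩ := mem_Icc_of_mem_edge hi hj
    h i hi' j hj'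

theorem edgeSumSplit_add_smul (y y' : ℕ → ℕ → ℝ) (a b : ℝ) :
    edgeSumSplit n1 n2 (a • y + b • y') = a * edgeSumSplit n1 n2 y + b * edgeSumSplit n1 n2 y' := by
  simp only [edgeSumSplit, Pi.add_apply, Pi.smul_apply, smul_eq_mul, sum_add_distrib, mul_sum]

theorem continuous_edgeSumSplit : Continuous (edgeSumSplit n1 n2) :=
  continuous_finsetSum _ fun i _ => continuous_finsetSum _ fun j _ =>
    (continuous_apply j).comp (continuous_apply i)

theorem LBSplit_nonneg (x : ℕ → ℝ) : 0 ≤ LBSplit n1 n2 x :=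
  Real.sInf_nonneg fun _ ⟨_, hy, hz⟩ => hz ▸ edgeSumSplit_nonneg hy

theorem LBSplit_add_smul_le {x x' : ℕ → ℝ} {y y' : ℕ → ℕ → ℝ} (hy : memPSplit n1 n2 x y)
    (hy' : memPSplit n1 n2 x' y') {a b : ℝ} (ha : 0 ≤ a) (hb : 0 ≤ b) (hab : a + b = 1) :
    LBSplit n1 n2 (a • x + b • x') ≤ a * LBSplit n1 n2 x + b * edgeSumSplit n1 n2 y' := by
  refine le_of_forall_pos_le_add fun η hη => ?_
  obtain ⟨_, ⟨y₀, hy₀, rfl⟩, hlt⟩ := Real.lt_sInf_add_pos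
    (s := {z | ∃ y, memPSplit n1 n2 x y ∧ z = edgeSumSplit n1 n2 y}) ⟨_, y, hy, rfl⟩ hη
  have hmem : memPSplit n1 n2 (a • x + b • x') (a • y₀ + b • y') :=
    convex_memPSplit n1 n2 (x := (x, y₀)) hy₀ (y := (x', y')) hy' ha hb hab
  have hbdd : BddBelow {z | ∃ y, memPSplit n1 n2 (a • x + b • x') y ∧ z = edgeSumSplit n1 n2 y} :=
    ⟨0, fun _ ⟨_, hy, hz⟩ => hz ▸ edgeSumSplit_nonneg hy⟩
  calc LBSplit n1 n2 (a • x + b • x') ≤ edgeSumSplit n1 n2 (a • y₀ + b • y') :=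
        csInf_le hbdd ⟨_, hmem, rfl⟩
    _ = a * edgeSumSplit n1 n2 y₀ + b * edgeSumSplit n1 n2 y' := edgeSumSplit_add_smul _ _ _ _
    _ ≤ a * (LBSplit n1 n2 x + η) + b * edgeSumSplit n1 n2 y' := by gcongr; exact hlt.le
    _ ≤ _ := by nlinarith

theorem LBSplit_smul_add_half_le {x : ℕ → ℝ} {y : ℕ → ℕ → ℝ} (hy : memPSplit n1 n2 x y) {ε : ℝ}
    (hε0 : 0 ≤ ε) (hε1 : ε ≤ 1) :
    LBSplit n1 n2 ((1 - ε) • x + ε • fun _ => 1 / 2) ≤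
      LBSplit n1 n2 x + ε * (edgeSumSplit n1 n2 fun _ _ => 1) / 2 := by
  have h := LBSplit_add_smul_le hy (memPSplit_half n1 n2) (sub_nonneg.2 hε1) hε0
    (sub_add_cancel 1 ε)
  have hhalf : edgeSumSplit n1 n2 (fun _ _ => (1 / 2 : ℝ)) =
      (edgeSumSplit n1 n2 fun _ _ => 1) / 2 := by
    simp only [edgeSumSplit, ← sum_div]
  rw [hhalf] at h
  nlinarith [LBSplit_nonneg (n1 := n1) (n2 := n2) x]

theorem IsRealization.exists_edgeSumSplit_le {x x' : ℕ → ℝ} {X : ℕ → Set ℝ}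
    (hX : IsRealization (Icc 1 (n1 + n2)) x' X) (hx : ∀ i ∈ Icc 1 (n1 + n2), 0 ≤ x i ∧ x i ≤ 1)
    {δ : ℝ} (hδ : ∀ i ∈ Icc 1 (n1 + n2), |x' i - x i| ≤ δ) :
    ∃ B, IsRealization (Icc 1 (n1 + n2)) x B ∧ edgeSumSplit n1 n2 (overlap B) ≤
      edgeSumSplit n1 n2 (overlap X) + 2 * δ * edgeSumSplit n1 n2 fun _ _ => 1 := by
  obtain ⟨B, hB, hBX⟩ := hX.exists_overlap_le hx
  exact ⟨B, hB, edgeSumSplit_le_add_mul fun i hi j hj => by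
    linarith [hBX i hi j hj, hδ i hi, hδ j hj]⟩

end EdgeSum

theorem bad_vector_in_interior_general (n1 n2 : ℕ)
    (hex : ∃ x : ℕ → ℝ, (∀ i ∈ Finset.Icc 1 (n1 + n2), 0 ≤ x i ∧ x i ≤ 1) ∧
      ∀ X : ℕ → Set ℝ,
        (∀ i ∈ Finset.Icc 1 (n1 + n2), MeasurableSet (X i)) →
        (∀ i ∈ Finset.Icc 1 (n1 + n2), X i ⊆ Set.Icc 0 1) →
        (∀ i ∈ Finset.Icc 1 (n1 + n2), (volume (X i)).toReal = x i) →
        LBSplit n1 n2 x <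
          ∑ i ∈ Finset.Icc 1 n1, ∑ j ∈ Finset.Icc (i + 1) (n1 + n2),
            (volume (X i ∩ X j)).toReal) :
    ∃ x : ℕ → ℝ, (∀ i ∈ Finset.Icc 1 (n1 + n2), 0 < x i ∧ x i < 1) ∧
      ∀ X : ℕ → Set ℝ,
        (∀ i ∈ Finset.Icc 1 (n1 + n2), MeasurableSet (X i)) →
        (∀ i ∈ Finset.Icc 1 (n1 + n2), X i ⊆ Set.Icc 0 1) →
        (∀ i ∈ Finset.Icc 1 (n1 + n2), (volume (X i)).toReal = x i) →
        LBSplit n1 n2 x <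
          ∑ i ∈ Finset.Icc 1 n1, ∑ j ∈ Finset.Icc (i + 1) (n1 + n2),
            (volume (X i ∩ X j)).toReal := by
  obtain ⟨x, hx, hbad⟩ := hex
  obtain ⟨X₀, hX₀, hmin⟩ := exists_isMinOn_realization _ hx continuous_edgeSumSplit
    fun _ _ => edgeSumSplit_congr
  have hgap : LBSplit n1 n2 x < edgeSumSplit n1 n2 (overlap X₀) :=
    hbad X₀ (fun i hi => (hX₀ i hi).1) (fun i hi => (hX₀ i hi).2.1) (fun i hi => (hX₀ i hi).2.2)
  set E := edgeSumSplit n1 n2 fun _ _ => 1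
  have hE : 0 ≤ E := sum_nonneg fun _ _ => sum_nonneg fun _ _ => zero_le_one
  obtain ⟨ε, hε, hε1, hεgap⟩ : ∃ ε > 0, ε ≤ 1 ∧
      ε * (2 * E + 2) ≤ edgeSumSplit n1 n2 (overlap X₀) - LBSplit n1 n2 x :=
    ⟨_, lt_min one_pos (div_pos (by linarith) (by linarith)), min_le_left _ _,
      (le_div_iff₀ (by linarith)).1 (min_le_right _ _)⟩
  have hLB := LBSplit_smul_add_half_le hX₀.memPSplit_overlap hε.le hε1
  set x' : ℕ → ℝ := (1 - ε) • x + ε • fun _ => 1 / 2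
  have hx' : ∀ i, x' i = (1 - ε) * x i + ε / 2 := fun i => by simp [x', div_eq_mul_inv]
  refine ⟨x', fun i hi => ?_, fun X hXm hX1 hXvol => ?_⟩
  · rw [hx']
    constructor <;> nlinarith [hx i hi]
  · have hX : IsRealization _ x' X := fun i hi => ⟨hXm i hi, hX1 i hi, hXvol i hi⟩
    obtain ⟨B, hB, hBX⟩ := hX.exists_edgeSumSplit_le hx (δ := ε / 2) fun i hi => by
      rw [hx', abs_le]
      constructor <;> nlinarith [hx i hi]
    change _ < edgeSumSplit n1 n2 (overlap X)
    nlinarith [hmin B hB]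

theorem bad_vector_in_interior (n1 n2 : ℕ) (h1 : 1 ≤ n1) (h2 : 1 ≤ n2)
    (hex : ∃ x : ℕ → ℝ, (∀ i ∈ Finset.Icc 1 (n1 + n2), 0 ≤ x i ∧ x i ≤ 1) ∧
      ∀ X : ℕ → Set ℝ,
        (∀ i ∈ Finset.Icc 1 (n1 + n2), MeasurableSet (X i)) →
        (∀ i ∈ Finset.Icc 1 (n1 + n2), X i ⊆ Set.Icc 0 1) →
        (∀ i ∈ Finset.Icc 1 (n1 + n2), (volume (X i)).toReal = x i) →
        LBSplit n1 n2 x <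
          ∑ i ∈ Finset.Icc 1 n1, ∑ j ∈ Finset.Icc (i + 1) (n1 + n2),
            (volume (X i ∩ X j)).toReal) :
    ∃ x : ℕ → ℝ, (∀ i ∈ Finset.Icc 1 (n1 + n2), 0 < x i ∧ x i < 1) ∧
      ∀ X : ℕ → Set ℝ,
        (∀ i ∈ Finset.Icc 1 (n1 + n2), MeasurableSet (X i)) →
        (∀ i ∈ Finset.Icc 1 (n1 + n2), X i ⊆ Set.Icc 0 1) →
        (∀ i ∈ Finset.Icc 1 (n1 + n2), (volume (X i)).toReal = x i) →
        LBSplit n1 n2 x <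
          ∑ i ∈ Finset.Icc 1 n1, ∑ j ∈ Finset.Icc (i + 1) (n1 + n2),
            (volume (X i ∩ X j)).toReal :=
  bad_vector_in_interior_general n1 n2 hex
end

section
/- Let n = n1 + n2 with n1, n2 ≥ 1, let G be the complete split graph with clique V1, independent set V2 and edge set E, and let P be the corresponding polytope of Theorem 3. Let x ∈ [0,1]^n with x_{n1+1} ≥ x_{n1+2} ≥ … ≥ x_n, let X_i ⊆ [0,1) be Lebesgue-measurable with μ(X_i) = x_i for all i ∈ {1,…,n} with X_j = [0, x_j) for j ∈ V2, let S ⊆ V2 with |S| ≤ n1 − 1, and let α be an integer with 0 ≤ α ≤ n1 − 1 such that: (a) μ(X_i ∩ X_j) = max{0, x_i + x_j − 1} for all i ∈ V1 and j ∈ V2 ∖ S; and (b) for every t ∈ [0,1), the number of indices i ∈ V1 ∪ S with t ∈ X_i is either α or α + 1. Then for every y with (x,y) ∈ P, ∑_{{i,j}∈E} y_{ij} ≥ ∑_{{i,j}∈E} μ(X_i ∩ X_j). -/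
open Finset

open MeasureTheory

/-!
Put `W = V1 ∪ S`. By (b) every `t ∈ [0,1)` lies in `N ∈ {α, α+1}` of the sets `X_i`, `i ∈ W`,
and for such `N` one has `N (N - 1) / 2 = α N - α (α + 1) / 2`. Integrating over `t` gives
`∑_{ij ∈ E*(W)} μ(X_i ∩ X_j) = α x(W) - α (α + 1) / 2`, the right-hand side of a clique
inequality of `P`, hence at most `y(E*(W))`. The edges of `G` are `E*(W)` without the pairs
inside `S`, together with `V1 × (V2 ∖ S)`. Inside `S` the sets are initial segments, so
`μ(X_i ∩ X_j) = min{x_i, x_j} ≥ y_ij`, and on `V1 × (V2 ∖ S)` condition (a) gives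
`μ(X_i ∩ X_j) = max{0, x_i + x_j - 1} ≤ y_ij`.
-/

section PairSum

variable {ι M : Type*} [LinearOrder ι] [AddCommMonoid M]

/-- `f(E*(W))` in the notation of the paper. -/
def pairSum (W : Finset ι) (f : ι → ι → M) : M :=
  ∑ i ∈ W, ∑ j ∈ W with i < j, f i j

lemma pairSum_filter (W : Finset ι) (p : ι → Prop) [DecidablePred p] (f : ι → ι → M) :
    pairSum {i ∈ W | p i} f = pairSum W (fun i j => if p i ∧ p j then f i j else 0) := by
  simp only [pairSum, sum_filter]
  refine sum_congr rfl fun i _ => ?_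
  by_cases hi : p i <;> simp [hi, ← ite_and, and_comm]

lemma sum_sum_filter_lt_union_of_forall_lt {s t : Finset ι} (hst : ∀ i ∈ s, ∀ j ∈ t, i < j)
    (f : ι → ι → M) :
    ∑ i ∈ s, ∑ j ∈ s ∪ t with i < j, f i j = pairSum s f + ∑ i ∈ s, ∑ j ∈ t, f i j := by
  have hdisj : Disjoint s t :=
    disjoint_left.2 fun i hi hit => lt_irrefl i (hst i hi i hit)
  rw [pairSum, ← sum_add_distrib]
  refine sum_congr rfl fun i hi => ?_
  rw [filter_union, filter_true_of_mem (hst i hi),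
    sum_union (hdisj.mono_left (filter_subset _ s))]

lemma pairSum_union_of_forall_lt {s t : Finset ι} (hst : ∀ i ∈ s, ∀ j ∈ t, i < j)
    (f : ι → ι → M) :
    pairSum (s ∪ t) f = pairSum s f + ∑ i ∈ s, ∑ j ∈ t, f i j + pairSum t f := by
  have hdisj : Disjoint s t :=
    disjoint_left.2 fun i hi hit => lt_irrefl i (hst i hi i hit)
  have h_upper : ∑ j ∈ t, ∑ k ∈ s ∪ t with j < k, f j k = pairSum t f :=
    sum_congr rfl fun j hj => by
      rw [filter_union, filter_false_of_mem fun k hk hjk => lt_asymm hjk (hst k hk j hj),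
        empty_union]
  rw [pairSum, sum_union hdisj, sum_sum_filter_lt_union_of_forall_lt hst, h_upper]

lemma pairSum_one (W : Finset ι) :
    pairSum W (fun _ _ => (1 : ℝ)) = #W * (#W - 1) / 2 := by
  rw [← Nat.cast_choose_two, ← card_product_filter_lt, card_filter, sum_product, pairSum]
  simp

end PairSum

section Indicator

variable {ι Ω : Type*}

lemma sum_indicator_one_eq_card (W : Finset ι) (A : ι → Set Ω) (t : Ω)
    [DecidablePred (t ∈ A ·)] :
    ∑ i ∈ W, (A i).indicator (1 : Ω → ℝ) t = #{i ∈ W | t ∈ A i} := by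
  simp [Set.indicator_apply]

lemma pairSum_indicator_one_inter [LinearOrder ι] (W : Finset ι) (A : ι → Set Ω) (t : Ω)
    [DecidablePred (t ∈ A ·)] :
    pairSum W (fun i j => (A i ∩ A j).indicator (1 : Ω → ℝ) t) =
      #{i ∈ W | t ∈ A i} * (#{i ∈ W | t ∈ A i} - 1) / 2 := by
  rw [← pairSum_one, pairSum_filter]
  simp [Set.indicator_apply]

end Indicator

section Measure

variable {ι Ω : Type*} [LinearOrder ι] [MeasurableSpace Ω]

lemma integral_pairSum {μ : Measure Ω} (W : Finset ι) (F : ι → ι → Ω → ℝ)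
    (hF : ∀ i ∈ W, ∀ j ∈ W, Integrable (F i j) μ) :
    ∫ t, pairSum W (fun i j => F i j t) ∂μ = pairSum W (fun i j => ∫ t, F i j t ∂μ) := by
  have hF' : ∀ i ∈ W, ∀ j ∈ W.filter (i < ·), Integrable (F i j) μ :=
    fun i hi j hj => hF i hi j (mem_of_mem_filter j hj)
  simp only [pairSum]
  rw [integral_finsetSum _ fun i hi => integrable_finsetSum _ (hF' i hi)]
  exact sum_congr rfl fun i hi => integral_finsetSum _ (hF' i hi)

open Classical in
theorem pairSum_measureReal_inter_of_card_mem (μ : Measure Ω) [IsFiniteMeasure μ]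
    (W : Finset ι) (A : ι → Set Ω) (hA : ∀ i ∈ W, MeasurableSet (A i)) (α : ℕ)
    (hcount : ∀ᵐ t ∂μ, #{i ∈ W | t ∈ A i} = α ∨ #{i ∈ W | t ∈ A i} = α + 1) :
    pairSum W (fun i j => μ.real (A i ∩ A j)) =
      α * ∑ i ∈ W, μ.real (A i) - α * (α + 1) / 2 * μ.real Set.univ := by
  have h_int : ∀ i ∈ W, Integrable ((A i).indicator (1 : Ω → ℝ)) μ :=
    fun i hi => (integrable_const 1).indicator (hA i hi)
  calc pairSum W (fun i j => μ.real (A i ∩ A j))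
      = ∫ t, pairSum W (fun i j => (A i ∩ A j).indicator (1 : Ω → ℝ) t) ∂μ := by
        rw [integral_pairSum W (fun i j => (A i ∩ A j).indicator 1) fun i hi j hj =>
          (integrable_const 1).indicator ((hA i hi).inter (hA j hj))]
        refine sum_congr rfl fun i hi => sum_congr rfl fun j hj => ?_
        exact (integral_indicator_one ((hA i hi).inter (hA j (mem_of_mem_filter j hj)))).symm
    _ = ∫ t, ((α : ℝ) * ∑ i ∈ W, (A i).indicator (1 : Ω → ℝ) t - α * (α + 1) / 2) ∂μ := by
        refine integral_congr_ae (hcount.mono fun t ht => ?_)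
        simp only [pairSum_indicator_one_inter, sum_indicator_one_eq_card]
        rcases ht with h | h <;> rw [h] <;> push_cast <;> ring
    _ = _ := by
        rw [integral_sub ((integrable_finsetSum _ h_int).const_mul _) (integrable_const _),
          integral_const_mul, integral_finsetSum _ h_int, integral_const, smul_eq_mul,
          mul_comm (μ.real _)]
        congr 2
        exact sum_congr rfl fun i hi => integral_indicator_one (hA i hi)

open Classical in
theorem pairSum_volume_real_inter_of_card_mem (W : Finset ι) (A : ι → Set ℝ)
    (hA : ∀ i ∈ W, MeasurableSet (A i)) (hA_sub : ∀ i ∈ W, A i ⊆ Set.Ico 0 1) (α : ℕ)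
    (hcount : ∀ t ∈ Set.Ico (0 : ℝ) 1,
      #{i ∈ W | t ∈ A i} = α ∨ #{i ∈ W | t ∈ A i} = α + 1) :
    pairSum W (fun i j => volume.real (A i ∩ A j)) =
      α * ∑ i ∈ W, volume.real (A i) - α * (α + 1) / 2 := by
  set I := Set.Ico (0 : ℝ) 1
  have h_restrict : ∀ B ⊆ I, (volume.restrict I).real B = volume.real B := fun B hB => by
    rw [measureReal_restrict_apply' measurableSet_Ico, Set.inter_eq_left.2 hB]
  have key := pairSum_measureReal_inter_of_card_mem (volume.restrict I) W A hA α
    ((ae_restrict_iff' measurableSet_Ico).2 (Filter.Eventually.of_forall hcount))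
  rw [measureReal_restrict_apply_univ, Real.volume_real_Ico_of_le zero_le_one, sub_zero,
    mul_one, sum_congr rfl fun i hi => h_restrict _ (hA_sub i hi)] at key
  rw [← key]
  exact sum_congr rfl fun i hi => sum_congr rfl fun j _ =>
    (h_restrict _ (Set.inter_subset_left.trans (hA_sub i hi))).symm

end Measure

lemma volume_real_Ico_zero_inter_Ico_zero (a b : ℝ) :
    volume.real (Set.Ico 0 a ∩ Set.Ico 0 b) = max (min a b) 0 := by
  rw [Set.Ico_inter_Ico, max_self, Real.volume_real_Ico, sub_zero]

lemma union_Icc_subset_Icc {n1 n2 : ℕ} {S : Finset ℕ} (hS : S ⊆ Icc (n1 + 1) (n1 + n2)) :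
    Icc 1 n1 ∪ S ⊆ Icc 1 (n1 + n2) :=
  union_subset (Icc_subset_Icc_right (Nat.le_add_right n1 n2))
    (hS.trans (Icc_subset_Icc_left (Nat.le_add_left 1 n1)))

lemma edgeSumSplit_add_pairSum {n1 n2 : ℕ} {S : Finset ℕ} (hS : S ⊆ Icc (n1 + 1) (n1 + n2))
    (f : ℕ → ℕ → ℝ) :
    edgeSumSplit n1 n2 f + pairSum S f =
      pairSum (Icc 1 n1 ∪ S) f + ∑ i ∈ Icc 1 n1, ∑ j ∈ Icc (n1 + 1) (n1 + n2) \ S, f i j := by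
  have h_lt : ∀ i ∈ Icc 1 n1, ∀ j ∈ Icc (n1 + 1) (n1 + n2), i < j := by
    simp only [mem_Icc]
    omega
  have h_edge : edgeSumSplit n1 n2 f =
      ∑ i ∈ Icc 1 n1, ∑ j ∈ Icc 1 n1 ∪ Icc (n1 + 1) (n1 + n2) with i < j, f i j := by
    refine sum_congr rfl fun i hi => sum_congr ?_ fun _ _ => rfl
    ext j
    simp only [mem_Icc, mem_filter, mem_union] at hi ⊢
    omega
  rw [h_edge, sum_sum_filter_lt_union_of_forall_lt h_lt,
    pairSum_union_of_forall_lt fun i hi j hj => h_lt i hi j (hS hj),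
    ← sum_congr rfl fun i _ => sum_sdiff hS, sum_add_distrib]
  abel

lemma memPSplit.clique_inequality {n1 n2 : ℕ} {x : ℕ → ℝ} {y : ℕ → ℕ → ℝ}
    (hy : memPSplit n1 n2 x y) {S : Finset ℕ} (hS : S ⊆ Icc (n1 + 1) (n1 + n2))
    (hScard : #S ≤ n1 - 1) {α : ℕ} (hα : α ≤ n1 - 1) :
    α * ∑ i ∈ Icc 1 n1 ∪ S, x i - α * (α + 1) / 2 ≤ pairSum (Icc 1 n1 ∪ S) y := by
  obtain ⟨-, hy_mccormick, -, hy_clique⟩ := hy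
  rcases Nat.eq_zero_or_pos α with rfl | hα_pos
  · have hW := union_Icc_subset_Icc hS
    simp only [Nat.cast_zero, zero_mul, zero_div, sub_self]
    exact sum_nonneg fun i hi => sum_nonneg fun j hj =>
      (hy_mccormick i (hW hi) j (hW (mem_of_mem_filter j hj)) (mem_filter.1 hj).2).1
  · exact hy_clique S hS hScard α hα_pos hα

lemma memPSplit.pairSum_le_pairSum_min {n1 n2 : ℕ} {x : ℕ → ℝ} {y : ℕ → ℕ → ℝ}
    (hy : memPSplit n1 n2 x y) {S : Finset ℕ} (hS : S ⊆ Icc (n1 + 1) (n1 + n2)) :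
    pairSum S y ≤ pairSum S (fun i j => min (x i) (x j)) := by
  have hV := union_Icc_subset_Icc hS
  refine sum_le_sum fun i hi => sum_le_sum fun j hj => ?_
  obtain ⟨hjS, hij⟩ := mem_filter.1 hj
  exact (hy.2.1 i (hV (mem_union_right _ hi)) j (hV (mem_union_right _ hjS)) hij).2

lemma memPSplit.max_zero_le {n1 n2 : ℕ} {x : ℕ → ℝ} {y : ℕ → ℕ → ℝ}
    (hy : memPSplit n1 n2 x y) {i j : ℕ} (hi : i ∈ Icc 1 n1) (hj : j ∈ Icc (n1 + 1) (n1 + n2)) :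
    max 0 (x i + x j - 1) ≤ y i j := by
  have hij : i < j := by
    simp only [mem_Icc] at hi hj
    omega
  exact max_le (hy.2.1 i (Icc_subset_Icc_right (Nat.le_add_right n1 n2) hi) j
    (Icc_subset_Icc_left (Nat.le_add_left 1 n1) hj) hij).1 (hy.2.2.1 i hi j hj)

open Classical in
theorem split_graph_lower_bound_general (n1 n2 : ℕ)
    (x : ℕ → ℝ)
    (X : ℕ → Set ℝ)
    (hmeas : ∀ i ∈ Finset.Icc 1 (n1 + n2), MeasurableSet (X i))
    (hsub : ∀ i ∈ Finset.Icc 1 (n1 + n2), X i ⊆ Set.Ico 0 1)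
    (hvol : ∀ i ∈ Finset.Icc 1 (n1 + n2), (volume (X i)).toReal = x i)
    (hXV2 : ∀ j ∈ Finset.Icc (n1 + 1) (n1 + n2), X j = Set.Ico 0 (x j))
    (S : Finset ℕ) (hS : S ⊆ Finset.Icc (n1 + 1) (n1 + n2)) (hScard : S.card ≤ n1 - 1)
    (α : ℕ) (hα : α ≤ n1 - 1)
    (ha : ∀ i ∈ Finset.Icc 1 n1, ∀ j ∈ Finset.Icc (n1 + 1) (n1 + n2) \ S,
      (volume (X i ∩ X j)).toReal = max 0 (x i + x j - 1))
    (hb : ∀ t ∈ Set.Ico (0 : ℝ) 1,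
      ((Finset.Icc 1 n1 ∪ S).filter (fun i => t ∈ X i)).card = α ∨
        ((Finset.Icc 1 n1 ∪ S).filter (fun i => t ∈ X i)).card = α + 1) :
    ∀ y : ℕ → ℕ → ℝ, memPSplit n1 n2 x y →
      ∑ i ∈ Finset.Icc 1 n1, ∑ j ∈ Finset.Icc (i + 1) (n1 + n2),
          (volume (X i ∩ X j)).toReal
        ≤ edgeSumSplit n1 n2 y := by
  intro y hy
  set m : ℕ → ℕ → ℝ := fun i j => volume.real (X i ∩ X j)
  have hW := union_Icc_subset_Icc hS
  have h_clique : pairSum (Icc 1 n1 ∪ S) m ≤ pairSum (Icc 1 n1 ∪ S) y := by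
    rw [pairSum_volume_real_inter_of_card_mem _ X (fun i hi => hmeas i (hW hi))
      (fun i hi => hsub i (hW hi)) α hb,
      sum_congr rfl fun i hi => (measureReal_def _ _).trans (hvol i (hW hi))]
    exact hy.clique_inequality hS hScard hα
  have h_S : pairSum S y ≤ pairSum S m :=
    (hy.pairSum_le_pairSum_min hS).trans <| sum_le_sum fun i hi => sum_le_sum fun j hj => by
      simp only [m, hXV2 i (hS hi), hXV2 j (hS (mem_of_mem_filter j hj)),
        volume_real_Ico_zero_inter_Ico_zero]
      exact le_max_left _ _
  have h_rest : ∑ i ∈ Icc 1 n1, ∑ j ∈ Icc (n1 + 1) (n1 + n2) \ S, m i j ≤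
      ∑ i ∈ Icc 1 n1, ∑ j ∈ Icc (n1 + 1) (n1 + n2) \ S, y i j :=
    sum_le_sum fun i hi => sum_le_sum fun j hj =>
      (ha i hi j hj).trans_le (hy.max_zero_le hi (mem_sdiff.1 hj).1)
  have h_m := edgeSumSplit_add_pairSum hS m
  have h_y := edgeSumSplit_add_pairSum hS y
  change edgeSumSplit n1 n2 m ≤ _
  linarith

open Classical in
theorem split_graph_lower_bound (n1 n2 : ℕ) (h1 : 1 ≤ n1) (h2 : 1 ≤ n2)
    (x : ℕ → ℝ)
    (hx : ∀ i ∈ Finset.Icc 1 (n1 + n2), 0 ≤ x i ∧ x i ≤ 1)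
    (hmono2 : ∀ i ∈ Finset.Icc (n1 + 1) (n1 + n2), ∀ j ∈ Finset.Icc (n1 + 1) (n1 + n2),
      i ≤ j → x j ≤ x i)
    (X : ℕ → Set ℝ)
    (hmeas : ∀ i ∈ Finset.Icc 1 (n1 + n2), MeasurableSet (X i))
    (hsub : ∀ i ∈ Finset.Icc 1 (n1 + n2), X i ⊆ Set.Ico 0 1)
    (hvol : ∀ i ∈ Finset.Icc 1 (n1 + n2), (volume (X i)).toReal = x i)
    (hXV2 : ∀ j ∈ Finset.Icc (n1 + 1) (n1 + n2), X j = Set.Ico 0 (x j))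
    (S : Finset ℕ) (hS : S ⊆ Finset.Icc (n1 + 1) (n1 + n2)) (hScard : S.card ≤ n1 - 1)
    (α : ℕ) (hα : α ≤ n1 - 1)
    (ha : ∀ i ∈ Finset.Icc 1 n1, ∀ j ∈ Finset.Icc (n1 + 1) (n1 + n2) \ S,
      (volume (X i ∩ X j)).toReal = max 0 (x i + x j - 1))
    (hb : ∀ t ∈ Set.Ico (0 : ℝ) 1,
      ((Finset.Icc 1 n1 ∪ S).filter (fun i => t ∈ X i)).card = α ∨
        ((Finset.Icc 1 n1 ∪ S).filter (fun i => t ∈ X i)).card = α + 1) :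
    ∀ y : ℕ → ℕ → ℝ, memPSplit n1 n2 x y →
      ∑ i ∈ Finset.Icc 1 n1, ∑ j ∈ Finset.Icc (i + 1) (n1 + n2),
          (volume (X i ∩ X j)).toReal
        ≤ edgeSumSplit n1 n2 y :=
  split_graph_lower_bound_general n1 n2 x X hmeas hsub hvol hXV2 S hS hScard α hα ha hb
end

section
/- For every x ∈ [0,1]^3 there exist Lebesgue-measurable sets X_1, X_2, X_3 ⊆ [0,1) with μ(X_i) = x_i for i = 1,2,3 such that for every y = (y_{12}, y_{13}, y_{23}) satisfying 0 ≤ y_{ij} ≤ min{x_i, x_j} and x_i + x_j − y_{ij} ≤ 1 for all 1 ≤ i < j ≤ 3, and y_{12} + y_{13} + y_{23} ≥ x_1 + x_2 + x_3 − 1, we have μ(X_1 ∩ X_2) + μ(X_1 ∩ X_3) + μ(X_2 ∩ X_3) ≤ y_{12} + y_{13} + y_{23}. -/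
open MeasureTheory

lemma vol_Ico_toReal (a b : ℝ) : (volume (Set.Ico a b)).toReal = max (b - a) 0 := by
  rw [Real.volume_Ico, ENNReal.toReal_ofReal']

lemma vol_union_toReal (a b c : ℝ) (h0 : 0 ≤ c) (h1 : c ≤ a) (h2 : a ≤ b) :
    (volume (Set.Ico a b ∪ Set.Ico 0 c)).toReal = (b - a) + c := by
  rw [measure_union ?_ measurableSet_Ico, Real.volume_Ico, Real.volume_Ico,
    ← ENNReal.ofReal_add (by linarith) (by linarith), ENNReal.toReal_ofReal (by linarith)]
  · ring
  · rw [Set.Ico_disjoint_Ico]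
    simp only [min_le_iff, le_max_iff]
    left; right; linarith

lemma Ico_inter_Ico_empty {a₁ b₁ a₂ b₂ : ℝ} (h : min b₁ b₂ ≤ max a₁ a₂) :
    Set.Ico a₁ b₁ ∩ Set.Ico a₂ b₂ = ∅ := by
  rw [Set.Ico_inter_Ico]
  exact Set.Ico_eq_empty (not_lt.2 h)

lemma Ico_inter_Ico_eq {a₁ b₁ a₂ b₂ a b : ℝ} (ha : max a₁ a₂ = a) (hb : min b₁ b₂ = b) :
    Set.Ico a₁ b₁ ∩ Set.Ico a₂ b₂ = Set.Ico a b := by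
  rw [Set.Ico_inter_Ico, ha, hb]

theorem triangle_sets_exist (x1 x2 x3 : ℝ)
    (h1 : 0 ≤ x1 ∧ x1 ≤ 1) (h2 : 0 ≤ x2 ∧ x2 ≤ 1) (h3 : 0 ≤ x3 ∧ x3 ≤ 1) :
    ∃ X1 X2 X3 : Set ℝ,
      MeasurableSet X1 ∧ X1 ⊆ Set.Ico 0 1 ∧ (volume X1).toReal = x1 ∧
      MeasurableSet X2 ∧ X2 ⊆ Set.Ico 0 1 ∧ (volume X2).toReal = x2 ∧
      MeasurableSet X3 ∧ X3 ⊆ Set.Ico 0 1 ∧ (volume X3).toReal = x3 ∧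
      ∀ y12 y13 y23 : ℝ,
        (0 ≤ y12 ∧ y12 ≤ min x1 x2 ∧ x1 + x2 - y12 ≤ 1) →
        (0 ≤ y13 ∧ y13 ≤ min x1 x3 ∧ x1 + x3 - y13 ≤ 1) →
        (0 ≤ y23 ∧ y23 ≤ min x2 x3 ∧ x2 + x3 - y23 ≤ 1) →
        x1 + x2 + x3 - 1 ≤ y12 + y13 + y23 →
        (volume (X1 ∩ X2)).toReal + (volume (X1 ∩ X3)).toReal +
            (volume (X2 ∩ X3)).toReal
          ≤ y12 + y13 + y23 := by
  obtain ⟨h1a, h1b⟩ := h1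
  obtain ⟨h2a, h2b⟩ := h2
  obtain ⟨h3a, h3b⟩ := h3
  by_cases hA : x1 + x2 + x3 ≤ 1
  · -- Case 1: all three arcs fit disjointly
    refine ⟨Set.Ico 0 x1, Set.Ico x1 (x1+x2), Set.Ico (x1+x2) (x1+x2+x3),
      measurableSet_Ico, Set.Ico_subset_Ico le_rfl h1b, ?_,
      measurableSet_Ico, Set.Ico_subset_Ico (by linarith) (by linarith), ?_,
      measurableSet_Ico, Set.Ico_subset_Ico (by linarith) (by linarith), ?_, ?_⟩
    · rw [vol_Ico_toReal, max_eq_left (by linarith)]; ring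
    · rw [vol_Ico_toReal, max_eq_left (by linarith)]; ring
    · rw [vol_Ico_toReal, max_eq_left (by linarith)]; ring
    · intro y12 y13 y23 hy12 hy13 hy23 _
      rw [Ico_inter_Ico_empty (le_max_of_le_right (min_le_left _ _)),
        Ico_inter_Ico_empty (le_max_of_le_right ((min_le_left _ _).trans (by linarith))),
        Ico_inter_Ico_empty (le_max_of_le_right (min_le_left _ _))]
      simp only [measure_empty, ENNReal.toReal_zero]
      linarith [hy12.1, hy13.1, hy23.1]
  · by_cases hB : x1 + x2 ≤ 1
    · -- Case 2: X3 wraps around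
      refine ⟨Set.Ico 0 x1, Set.Ico x1 (x1+x2),
        Set.Ico (x1+x2) 1 ∪ Set.Ico 0 (x1+x2+x3-1),
        measurableSet_Ico, Set.Ico_subset_Ico le_rfl h1b, ?_,
        measurableSet_Ico, Set.Ico_subset_Ico (by linarith) (by linarith), ?_,
        (measurableSet_Ico.union measurableSet_Ico),
        Set.union_subset (Set.Ico_subset_Ico (by linarith) le_rfl)
          (Set.Ico_subset_Ico le_rfl (by linarith)), ?_, ?_⟩
      · rw [vol_Ico_toReal, max_eq_left (by linarith)]; ring
      · rw [vol_Ico_toReal, max_eq_left (by linarith)]; ring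
      · rw [vol_union_toReal (x1+x2) 1 (x1+x2+x3-1) (by linarith) (by linarith) (by linarith)]
        ring
      · intro y12 y13 y23 hy12 hy13 hy23 hsum
        have e12 : Set.Ico (0:ℝ) x1 ∩ Set.Ico x1 (x1+x2) = ∅ :=
          Ico_inter_Ico_empty (le_max_of_le_right (min_le_left _ _))
        have e13 : Set.Ico (0:ℝ) x1 ∩ (Set.Ico (x1+x2) 1 ∪ Set.Ico 0 (x1+x2+x3-1)) =
            Set.Ico 0 (min x1 (x1+x2+x3-1)) := by
          rw [Set.inter_union_distrib_left,
            Ico_inter_Ico_empty (le_max_of_le_right ((min_le_left _ _).trans (by linarith))),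
            Set.empty_union, Ico_inter_Ico_eq (max_self 0) rfl]
        have e23 : Set.Ico x1 (x1+x2) ∩ (Set.Ico (x1+x2) 1 ∪ Set.Ico 0 (x1+x2+x3-1)) =
            Set.Ico x1 (x1+x2+x3-1) := by
          rw [Set.inter_union_distrib_left,
            Ico_inter_Ico_empty (le_max_of_le_right (min_le_left _ _)),
            Set.empty_union,
            Ico_inter_Ico_eq (max_eq_left h1a) (min_eq_right (by linarith))]
        rw [e12, e13, e23]
        simp only [measure_empty, ENNReal.toReal_zero]
        rw [vol_Ico_toReal, vol_Ico_toReal]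
        rcases le_total x1 (x1+x2+x3-1) with h | h
        · rw [min_eq_left h, max_eq_left (by linarith), max_eq_left (by linarith)]
          linarith
        · rw [min_eq_right h, max_eq_left (by linarith), max_eq_right (by linarith)]
          linarith
    · push_neg at hB
      by_cases hC : x1 + x2 + x3 ≤ 2
      · -- Case 3: X2 wraps, X3 does not
        refine ⟨Set.Ico 0 x1, Set.Ico x1 1 ∪ Set.Ico 0 (x1+x2-1),
          Set.Ico (x1+x2-1) (x1+x2+x3-1),
          measurableSet_Ico, Set.Ico_subset_Ico le_rfl h1b, ?_,
          (measurableSet_Ico.union measurableSet_Ico),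
          Set.union_subset (Set.Ico_subset_Ico h1a le_rfl)
            (Set.Ico_subset_Ico le_rfl (by linarith)), ?_,
          measurableSet_Ico, Set.Ico_subset_Ico (by linarith) (by linarith), ?_, ?_⟩
        · rw [vol_Ico_toReal, max_eq_left (by linarith)]; ring
        · rw [vol_union_toReal x1 1 (x1+x2-1) (by linarith) (by linarith) (by linarith)]
          ring
        · rw [vol_Ico_toReal, max_eq_left (by linarith)]; ring
        · intro y12 y13 y23 hy12 hy13 hy23 hsum
          have e12 : Set.Ico (0:ℝ) x1 ∩ (Set.Ico x1 1 ∪ Set.Ico 0 (x1+x2-1)) =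
              Set.Ico 0 (x1+x2-1) := by
            rw [Set.inter_union_distrib_left,
              Ico_inter_Ico_empty (le_max_of_le_right (min_le_left _ _)),
              Set.empty_union,
              Ico_inter_Ico_eq (max_self 0) (min_eq_right (by linarith))]
          have e13 : Set.Ico (0:ℝ) x1 ∩ Set.Ico (x1+x2-1) (x1+x2+x3-1) =
              Set.Ico (x1+x2-1) (min x1 (x1+x2+x3-1)) :=
            Ico_inter_Ico_eq (max_eq_right (by linarith)) rfl
          have e23 : (Set.Ico x1 1 ∪ Set.Ico 0 (x1+x2-1)) ∩
              Set.Ico (x1+x2-1) (x1+x2+x3-1) = Set.Ico x1 (x1+x2+x3-1) := by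
            rw [Set.union_inter_distrib_right,
              Ico_inter_Ico_eq (max_eq_left (by linarith)) (min_eq_right (by linarith)),
              Ico_inter_Ico_empty (le_max_of_le_right (min_le_left _ _)),
              Set.union_empty]
          rw [e12, e13, e23]
          rw [vol_Ico_toReal, vol_Ico_toReal, vol_Ico_toReal,
            max_eq_left (by linarith)]
          rcases le_total x1 (x1+x2+x3-1) with h | h
          · rw [min_eq_left h, max_eq_left (by linarith), max_eq_left (by linarith)]
            linarith
          · rw [min_eq_right h, max_eq_left (by linarith), max_eq_right (by linarith)]
            linarith
      · -- Case 4: X2 and X3 both wrap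
        push_neg at hC
        refine ⟨Set.Ico 0 x1, Set.Ico x1 1 ∪ Set.Ico 0 (x1+x2-1),
          Set.Ico (x1+x2-1) 1 ∪ Set.Ico 0 (x1+x2+x3-2),
          measurableSet_Ico, Set.Ico_subset_Ico le_rfl h1b, ?_,
          (measurableSet_Ico.union measurableSet_Ico),
          Set.union_subset (Set.Ico_subset_Ico h1a le_rfl)
            (Set.Ico_subset_Ico le_rfl (by linarith)), ?_,
          (measurableSet_Ico.union measurableSet_Ico),
          Set.union_subset (Set.Ico_subset_Ico (by linarith) le_rfl)
            (Set.Ico_subset_Ico le_rfl (by linarith)), ?_, ?_⟩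
        · rw [vol_Ico_toReal, max_eq_left (by linarith)]; ring
        · rw [vol_union_toReal x1 1 (x1+x2-1) (by linarith) (by linarith) (by linarith)]
          ring
        · rw [vol_union_toReal (x1+x2-1) 1 (x1+x2+x3-2) (by linarith) (by linarith)
            (by linarith)]
          ring
        · intro y12 y13 y23 hy12 hy13 hy23 hsum
          have e12 : Set.Ico (0:ℝ) x1 ∩ (Set.Ico x1 1 ∪ Set.Ico 0 (x1+x2-1)) =
              Set.Ico 0 (x1+x2-1) := by
            rw [Set.inter_union_distrib_left,
              Ico_inter_Ico_empty (le_max_of_le_right (min_le_left _ _)),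
              Set.empty_union,
              Ico_inter_Ico_eq (max_self 0) (min_eq_right (by linarith))]
          have e13 : Set.Ico (0:ℝ) x1 ∩ (Set.Ico (x1+x2-1) 1 ∪ Set.Ico 0 (x1+x2+x3-2)) =
              Set.Ico (x1+x2-1) x1 ∪ Set.Ico 0 (x1+x2+x3-2) := by
            rw [Set.inter_union_distrib_left,
              Ico_inter_Ico_eq (max_eq_right (by linarith)) (min_eq_left h1b),
              Ico_inter_Ico_eq (max_self 0) (min_eq_right (by linarith))]
          have e23 : (Set.Ico x1 1 ∪ Set.Ico 0 (x1+x2-1)) ∩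
              (Set.Ico (x1+x2-1) 1 ∪ Set.Ico 0 (x1+x2+x3-2)) =
              Set.Ico x1 1 ∪ Set.Ico 0 (x1+x2+x3-2) := by
            rw [Set.union_inter_distrib_right, Set.inter_union_distrib_left,
              Set.inter_union_distrib_left,
              Ico_inter_Ico_eq (max_eq_left (by linarith)) (min_self 1),
              Ico_inter_Ico_empty (show min (1:ℝ) (x1+x2+x3-2) ≤ max x1 0 from
                (min_le_right _ _).trans (le_max_of_le_left (by linarith))),
              Ico_inter_Ico_empty (le_max_of_le_right (min_le_left _ _)),
              Ico_inter_Ico_eq (max_self 0) (min_eq_right (by linarith)),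
              Set.union_empty, Set.empty_union]
          rw [e12, e13, e23]
          rw [vol_Ico_toReal, max_eq_left (by linarith),
            vol_union_toReal (x1+x2-1) x1 (x1+x2+x3-2) (by linarith) (by linarith)
              (by linarith),
            vol_union_toReal x1 1 (x1+x2+x3-2) (by linarith) (by linarith) h1b]
          obtain ⟨_, _, hy12c⟩ := hy12
          obtain ⟨_, _, hy13c⟩ := hy13
          obtain ⟨_, _, hy23c⟩ := hy23
          linarith
end

section
/- Let f(x_1,x_2,x_3) = x_1 x_2 + x_1 x_3 + x_2 x_3, let X(f) = conv{(x, f(x)) : x ∈ [0,1]^3} ⊆ ℝ^4, and let M_3 be the set of (x,y) ∈ [0,1]^6 satisfying the McCormick inequalities y_{ij} ≥ 0, y_{ij} ≤ x_i, y_{ij} ≤ x_j, x_i + x_j − y_{ij} ≤ 1 for all 1 ≤ i < j ≤ 3. Then the point ((1/2, 1/2, 1/2), 0) ∈ ℝ^4 belongs to π[f](M_3) = {(x, y_{12}+y_{13}+y_{23}) : (x,y) ∈ M_3} but does not belong to X(f); in particular π[f](M_3) ≠ X(f). -/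
/-- The quadratic function of the triangle `K_3`. -/
def fK3 (x : Fin 3 → ℝ) : ℝ := x 0 * x 1 + x 0 * x 2 + x 1 * x 2

/-- `X(f)` for the triangle: the convex hull of the graph of `f` over `[0,1]^3`. -/
noncomputable def XfK3 : Set ((Fin 3 → ℝ) × ℝ) :=
  convexHull ℝ {p : (Fin 3 → ℝ) × ℝ |
    (∀ i, 0 ≤ p.1 i ∧ p.1 i ≤ 1) ∧ p.2 = fK3 p.1}

/-- The McCormick relaxation `M_3`. -/
def memM3 (x : Fin 3 → ℝ) (y : Fin 3 → Fin 3 → ℝ) : Prop :=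
  (∀ i, 0 ≤ x i ∧ x i ≤ 1) ∧
  (0 ≤ y 0 1 ∧ y 0 1 ≤ x 0 ∧ y 0 1 ≤ x 1 ∧ x 0 + x 1 - y 0 1 ≤ 1) ∧
  (0 ≤ y 0 2 ∧ y 0 2 ≤ x 0 ∧ y 0 2 ≤ x 2 ∧ x 0 + x 2 - y 0 2 ≤ 1) ∧
  (0 ≤ y 1 2 ∧ y 1 2 ≤ x 1 ∧ y 1 2 ≤ x 2 ∧ x 1 + x 2 - y 1 2 ≤ 1)

/-- `π[f](M_3)`. -/
def projM3 : Set ((Fin 3 → ℝ) × ℝ) :=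
  {p | ∃ y : Fin 3 → Fin 3 → ℝ, memM3 p.1 y ∧ p.2 = y 0 1 + y 0 2 + y 1 2}

theorem mcCormick_too_weak_for_triangle :
    ((fun _ => (1/2 : ℝ)), (0 : ℝ)) ∈ projM3 ∧
    ((fun _ => (1/2 : ℝ)), (0 : ℝ)) ∉ XfK3 ∧
    projM3 ≠ XfK3 := by
  have hmem : ((fun _ => (1/2 : ℝ)), (0 : ℝ)) ∈ projM3 := by
    refine ⟨fun _ _ => 0, ⟨fun i => by norm_num, ?_, ?_, ?_⟩, by norm_num⟩ <;>
      refine ⟨le_refl 0, by norm_num, by norm_num, by norm_num⟩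
  have hnot : ((fun _ => (1/2 : ℝ)), (0 : ℝ)) ∉ XfK3 := by
    intro h
    -- separating halfspace C = { p | p.1 0 + p.1 1 + p.1 2 ≤ 1 + p.2 }
    set C : Set ((Fin 3 → ℝ) × ℝ) :=
      {p | p.1 0 + p.1 1 + p.1 2 ≤ 1 + p.2} with hC
    have hconv : Convex ℝ C := by
      intro p hp q hq a b ha hb hab
      simp only [hC, Set.mem_setOf_eq] at hp hq ⊢
      simp only [Prod.fst_add, Prod.snd_add, Prod.smul_fst, Prod.smul_snd,
        Pi.add_apply, Pi.smul_apply, smul_eq_mul]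
      nlinarith
    have hsub : {p : (Fin 3 → ℝ) × ℝ |
        (∀ i, 0 ≤ p.1 i ∧ p.1 i ≤ 1) ∧ p.2 = fK3 p.1} ⊆ C := by
      rintro ⟨x, y⟩ ⟨hx, hy⟩
      simp only [hC, Set.mem_setOf_eq] at *
      have h0 := hx 0; have h1 := hx 1; have h2 := hx 2
      have key : (1 - x 0) * (1 - x 1) * (1 - x 2) + x 0 * x 1 * x 2 ≥ 0 := by
        have a := mul_nonneg (mul_nonneg (by linarith [h0.2] : (0:ℝ) ≤ 1 - x 0)
          (by linarith [h1.2] : (0:ℝ) ≤ 1 - x 1)) (by linarith [h2.2] : (0:ℝ) ≤ 1 - x 2)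
        have b := mul_nonneg (mul_nonneg h0.1 h1.1) h2.1
        linarith
      rw [hy]; unfold fK3; nlinarith
    have := convexHull_min hsub hconv h
    simp only [hC, Set.mem_setOf_eq] at this
    norm_num at this
  refine ⟨hmem, hnot, fun heq => hnot (heq ▸ hmem)⟩
end

section
/- Let G = (V,E) be a graph with V = {1,…,n}, let f(x) = ∑_{{i,j}∈E} x_i x_j, and let X(f) = conv{(x, f(x)) : x ∈ [0,1]^n}. Then for every x ∈ [0,1]^n, max{z : (x,z) ∈ X(f)} = ∑_{{i,j}∈E} min{x_i, x_j}; that is, the point (x, ∑_{{i,j}∈E} min{x_i, x_j}) belongs to X(f), and every (x,z) ∈ X(f) satisfies z ≤ ∑_{{i,j}∈E} min{x_i, x_j}. -/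
open Finset

/-! The function `g x = ∑_{ij ∈ E} min (x i) (x j)` is concave and dominates `f` on the cube, so
its hypograph contains `X(f)`. Conversely, `g = f` at `{0,1}`-points, and if `t` is the largest
value of `x` in `(0,1)` then `x = t • min (x / t) 1 + (1 - t) • 𝟙[x = 1]`. Both summands are
monotone images of `x`, and `g` is affine along such a split because monotone maps commute with
`min`; since `min (x / t) 1` has fewer values in `(0,1)`, induction puts `(x, g x)` in `X(f)`. -/

/-- The quadratic function `f(x) = ∑_{ij ∈ E} x_i x_j` of a graph given by its edge set
`E`, a finite set of ordered pairs `(i, j)` with `i < j`. -/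
def fGraph (E : Finset (ℕ × ℕ)) (x : ℕ → ℝ) : ℝ :=
  ∑ e ∈ E, x e.1 * x e.2

/-- `X(f)`: the convex hull of the graph of `f` over the cube `[0,1]^n`. -/
noncomputable def XfGraph (n : ℕ) (E : Finset (ℕ × ℕ)) : Set ((ℕ → ℝ) × ℝ) :=
  convexHull ℝ {p : (ℕ → ℝ) × ℝ |
    (∀ i ∈ Finset.Icc 1 n, 0 ≤ p.1 i ∧ p.1 i ≤ 1) ∧
    (∀ i ∉ Finset.Icc 1 n, p.1 i = 0) ∧ p.2 = fGraph E p.1}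

def edgeMinSum (E : Finset (ℕ × ℕ)) (x : ℕ → ℝ) : ℝ :=
  ∑ e ∈ E, min (x e.1) (x e.2)

def InCube (n : ℕ) (x : ℕ → ℝ) : Prop :=
  (∀ i ∈ Icc 1 n, 0 ≤ x i ∧ x i ≤ 1) ∧ ∀ i ∉ Icc 1 n, x i = 0

noncomputable def fracValues (n : ℕ) (x : ℕ → ℝ) : Finset ℝ :=
  ((Icc 1 n).image x).filter fun v => 0 < v ∧ v < 1

section

variable {n : ℕ} {E : Finset (ℕ × ℕ)} {x : ℕ → ℝ}

lemma fGraph_le_edgeMinSum (hx : ∀ i, 0 ≤ x i ∧ x i ≤ 1) : fGraph E x ≤ edgeMinSum E x :=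
  sum_le_sum fun _ _ => le_min (mul_le_of_le_one_right (hx _).1 (hx _).2)
    (mul_le_of_le_one_left (hx _).1 (hx _).2)

lemma fGraph_eq_edgeMinSum_of_boolean (hx : ∀ i, x i = 0 ∨ x i = 1) :
    fGraph E x = edgeMinSum E x :=
  sum_congr rfl fun e _ => by
    rcases hx e.1 with h₁ | h₁ <;> rcases hx e.2 with h₂ | h₂ <;> simp [h₁, h₂]

lemma concaveOn_edgeMinSum (E : Finset (ℕ × ℕ)) : ConcaveOn ℝ Set.univ (edgeMinSum E) := by
  induction E using Finset.induction_on with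
  | empty =>
    have h : edgeMinSum ∅ = fun _ => 0 := funext fun _ => sum_empty
    exact h ▸ concaveOn_const 0 convex_univ
  | insert e E he ih =>
    have hmin : ConcaveOn ℝ Set.univ fun y : ℕ → ℝ => min (y e.1) (y e.2) :=
      ((LinearMap.proj e.1).concaveOn convex_univ).inf ((LinearMap.proj e.2).concaveOn convex_univ)
    have h : edgeMinSum (insert e E) = (fun y : ℕ → ℝ => min (y e.1) (y e.2)) + edgeMinSum E :=
      funext fun _ => sum_insert he
    exact h ▸ hmin.add ih

lemma edgeMinSum_comp {φ : ℝ → ℝ} (hφ : Monotone φ) :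
    edgeMinSum E (φ ∘ x) = ∑ e ∈ E, φ (min (x e.1) (x e.2)) :=
  sum_congr rfl fun _ _ => hφ.map_min.symm

lemma pos_and_lt_one_of_mem_fracValues {v : ℝ} (hv : v ∈ fracValues n x) : 0 < v ∧ v < 1 :=
  (mem_filter.1 hv).2

namespace InCube

lemma zero_le_and_le_one (hx : InCube n x) (i : ℕ) : 0 ≤ x i ∧ x i ≤ 1 := by
  by_cases hi : i ∈ Icc 1 n
  · exact hx.1 i hi
  · simp [hx.2 i hi]

lemma comp (hx : InCube n x) {φ : ℝ → ℝ} (hφ0 : φ 0 = 0)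
    (hφ : Set.MapsTo φ (Set.Icc 0 1) (Set.Icc 0 1)) : InCube n (φ ∘ x) :=
  ⟨fun i hi => hφ (hx.1 i hi), fun i hi => by simp [hx.2 i hi, hφ0]⟩

lemma boolean_of_fracValues_eq_empty (hx : InCube n x) (h : fracValues n x = ∅) (i : ℕ) :
    x i = 0 ∨ x i = 1 := by
  by_cases hi : i ∈ Icc 1 n
  · by_contra! hne
    have hmem : x i ∈ fracValues n x := mem_filter.2 ⟨mem_image_of_mem x hi,
      (hx.1 i hi).1.lt_of_ne' hne.1, (hx.1 i hi).2.lt_of_ne hne.2⟩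
    simp [h] at hmem
  · exact .inl (hx.2 i hi)

lemma le_max'_fracValues_or_eq_one (hx : InCube n x) (hne : (fracValues n x).Nonempty) (i : ℕ) :
    x i ≤ (fracValues n x).max' hne ∨ x i = 1 := by
  have hmax := pos_and_lt_one_of_mem_fracValues ((fracValues n x).max'_mem hne)
  by_cases hi : i ∈ Icc 1 n
  · obtain ⟨h0, h1⟩ := hx.1 i hi
    rcases h0.eq_or_lt with h0 | h0
    · exact .inl (h0 ▸ hmax.1.le)
    rcases h1.lt_or_eq with h1 | h1
    · exact .inl (le_max' _ _ (mem_filter.2 ⟨mem_image_of_mem x hi, h0, h1⟩))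
    · exact .inr h1
  · exact .inl ((hx.2 i hi).trans_le hmax.1.le)

end InCube

lemma mk_fGraph_mem_XfGraph (hx : InCube n x) : (x, fGraph E x) ∈ XfGraph n E :=
  subset_convexHull ℝ _ ⟨hx.1, hx.2, rfl⟩

lemma XfGraph_subset_hypograph : XfGraph n E ⊆ {p | p.2 ≤ edgeMinSum E p.1} := by
  refine convexHull_min ?_ ?_
  · rintro ⟨y, z⟩ ⟨hy, hy0, hz : z = fGraph E y⟩
    exact hz ▸ fGraph_le_edgeMinSum (InCube.zero_le_and_le_one ⟨hy, hy0⟩)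
  · simpa using (concaveOn_edgeMinSum E).convex_hypograph

lemma mk_edgeMinSum_mem_of_monotone_split {C : Set ((ℕ → ℝ) × ℝ)} (hC : Convex ℝ C)
    {φ ψ : ℝ → ℝ} (hφ : Monotone φ) (hψ : Monotone ψ) {t : ℝ} (ht0 : 0 ≤ t) (ht1 : t ≤ 1)
    (hx : ∀ i, t * φ (x i) + (1 - t) * ψ (x i) = x i)
    (hφC : (φ ∘ x, edgeMinSum E (φ ∘ x)) ∈ C) (hψC : (ψ ∘ x, edgeMinSum E (ψ ∘ x)) ∈ C) :
    (x, edgeMinSum E x) ∈ C := by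
  convert hC hφC hψC ht0 (sub_nonneg.2 ht1) (add_sub_cancel t 1) using 1
  refine Prod.ext (funext fun i => (hx i).symm) ?_
  simp only [Prod.snd_add, Prod.smul_snd, smul_eq_mul, edgeMinSum_comp hφ, edgeMinSum_comp hψ,
    mul_sum, ← sum_add_distrib]
  refine sum_congr rfl fun e _ => ?_
  rcases min_choice (x e.1) (x e.2) with h | h <;> rw [h, hx]

lemma mul_min_div_one_add_indicator {t s : ℝ} (ht0 : 0 < t) (ht1 : t < 1) (hs : s ≤ t ∨ s = 1) :
    t * min (s / t) 1 + (1 - t) * (if 1 ≤ s then 1 else 0) = s := by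
  rcases hs with hs | rfl
  · rw [min_eq_left ((div_le_one ht0).2 hs), if_neg (by linarith), mul_div_cancel₀ s ht0.ne']
    ring
  · rw [min_eq_right ((one_le_div ht0).2 ht1.le), if_pos le_rfl]
    ring

lemma card_fracValues_comp_lt {t : ℝ} (ht : t ∈ fracValues n x) :
    (fracValues n ((fun s => min (s / t) 1) ∘ x)).card < (fracValues n x).card := by
  obtain ⟨ht0, ht1⟩ := pos_and_lt_one_of_mem_fracValues ht
  calc _ ≤ (((fracValues n x).erase t).image fun s => min (s / t) 1).card := by
        refine card_le_card fun v hv => ?_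
        obtain ⟨hv, hv0, hv1⟩ := mem_filter.1 hv
        obtain ⟨i, hi, rfl⟩ := mem_image.1 hv
        simp only [Function.comp_apply, lt_min_iff, min_lt_iff, lt_irrefl, or_false] at hv0 hv1
        have hlt : x i < t := (div_lt_one ht0).1 hv1
        have hpos : 0 < x i := (div_pos_iff_of_pos_right ht0).1 hv0.1
        exact mem_image_of_mem _ (mem_erase.2 ⟨hlt.ne,
          mem_filter.2 ⟨mem_image_of_mem x hi, hpos, hlt.trans ht1⟩⟩)
    _ ≤ ((fracValues n x).erase t).card := card_image_le
    _ < _ := card_erase_lt_of_mem ht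

lemma InCube.mk_edgeMinSum_mem_XfGraph (hx : InCube n x) :
    (x, edgeMinSum E x) ∈ XfGraph n E := by
  induction hk : (fracValues n x).card using Nat.strong_induction_on generalizing x with
  | _ k ih =>
  obtain hempty | hne := (fracValues n x).eq_empty_or_nonempty
  · rw [← fGraph_eq_edgeMinSum_of_boolean (hx.boolean_of_fracValues_eq_empty hempty)]
    exact mk_fGraph_mem_XfGraph hx
  set t := (fracValues n x).max' hne
  have ht : t ∈ fracValues n x := max'_mem _ _
  obtain ⟨ht0, ht1⟩ := pos_and_lt_one_of_mem_fracValues ht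
  set φ : ℝ → ℝ := fun s => min (s / t) 1
  set ψ : ℝ → ℝ := fun s => if 1 ≤ s then 1 else 0
  have hφ : Monotone φ := fun a b h => min_le_min_right 1 (div_le_div_of_nonneg_right h ht0.le)
  have hψ : Monotone ψ := fun a b h => by
    simp only [ψ]
    split_ifs <;> linarith
  have hψx : InCube n (ψ ∘ x) := hx.comp (by simp [ψ]) fun s _ => by
    simp only [ψ]
    split_ifs <;> simp
  refine mk_edgeMinSum_mem_of_monotone_split (convex_convexHull ℝ _) hφ hψ ht0.le ht1.le
    (fun i => mul_min_div_one_add_indicator ht0 ht1 (hx.le_max'_fracValues_or_eq_one hne i))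
    (ih _ (hk ▸ card_fracValues_comp_lt ht) (hx.comp (by simp [φ]) fun s hs =>
      ⟨le_min (div_nonneg hs.1 ht0.le) zero_le_one, min_le_right _ _⟩) rfl) ?_
  rw [← fGraph_eq_edgeMinSum_of_boolean fun i => by
    simp only [Function.comp_apply, ψ]
    split_ifs <;> simp]
  exact mk_fGraph_mem_XfGraph hψx

end

theorem upper_boundary_of_Xf_general (n : ℕ) (E : Finset (ℕ × ℕ))
    (x : ℕ → ℝ) (hx : ∀ i ∈ Finset.Icc 1 n, 0 ≤ x i ∧ x i ≤ 1)
    (hx0 : ∀ i ∉ Finset.Icc 1 n, x i = 0) :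
    (x, ∑ e ∈ E, min (x e.1) (x e.2)) ∈ XfGraph n E ∧
    ∀ z : ℝ, (x, z) ∈ XfGraph n E → z ≤ ∑ e ∈ E, min (x e.1) (x e.2) :=
  ⟨InCube.mk_edgeMinSum_mem_XfGraph ⟨hx, hx0⟩, fun _ hz => XfGraph_subset_hypograph hz⟩

/-- The upper boundary of `X(f)` is given by `∑_{ij ∈ E} min{x_i, x_j}`: this value is
attained, and it is an upper bound for `z` over the fiber of `X(f)` above `x`. -/
theorem upper_boundary_of_Xf (n : ℕ) (E : Finset (ℕ × ℕ))
    (hE : ∀ e ∈ E, 1 ≤ e.1 ∧ e.1 < e.2 ∧ e.2 ≤ n)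
    (x : ℕ → ℝ) (hx : ∀ i ∈ Finset.Icc 1 n, 0 ≤ x i ∧ x i ≤ 1)
    (hx0 : ∀ i ∉ Finset.Icc 1 n, x i = 0) :
    (x, ∑ e ∈ E, min (x e.1) (x e.2)) ∈ XfGraph n E ∧
    ∀ z : ℝ, (x, z) ∈ XfGraph n E → z ≤ ∑ e ∈ E, min (x e.1) (x e.2) :=
  upper_boundary_of_Xf_general n E x hx hx0
end
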